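/- arXiv:2106.05935 — 12 statements merged into one kernel-verified Lean document; each statement's English description precedes it below -/
import Mathlib

section
/- Let X be a Banach lattice, let x ∈ X with ‖x‖ = 1 and let x* be a continuous linear functional on X with ‖x*‖ = 1 such that x*(x) = 1. Then for every y ∈ X with 0 ≤ y ≤ x⁻ one has x*(y) ≤ 0, and for every y ∈ X with 0 ≤ y ≤ x⁺ one has x*(y) ≥ 0. (By the Riesz–Kantorovich formulas these two conditions say exactly that x*⁺(x⁻) = 0 = x*⁻(x⁺).) -/
/-!
If `0 ≤ y ≤ x⁻`, then adding `2y` to `x` only moves mass of the negative part towards zero, so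
`|x + 2y| ≤ |x|`; by solidity of the norm `f (x + 2y) ≤ ‖f‖ ‖x + 2y‖ ≤ ‖f‖ ‖x‖ = f x`, whence
`f y ≤ 0`. The statement for `x⁺` is the same one applied to `-x` and `-f`.
-/

section Lattice

variable {α : Type*} [Lattice α] [AddCommGroup α] [IsOrderedAddMonoid α]

theorem abs_add_add_le_abs_of_le_negPart {x y : α} (hy0 : 0 ≤ y) (hy : y ≤ x⁻) :
    |x + (y + y)| ≤ |x| := by
  rw [abs_le']
  constructor
  · calc x + (y + y) ≤ x + (x⁻ + x⁻) := add_le_add_right (add_le_add hy hy) x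
      _ = x⁺ + x⁻ := by nth_rw 1 [← posPart_sub_negPart x]; abel
      _ = |x| := posPart_add_negPart x
  · calc -(x + (y + y)) = -x - (y + y) := by abel
      _ ≤ -x := sub_le_self _ (add_nonneg hy0 hy0)
      _ ≤ |x| := neg_le_abs x

end Lattice

section NormedLattice

variable {X : Type*} [NormedAddCommGroup X] [Lattice X] [HasSolidNorm X] [NormedSpace ℝ X]

theorem ContinuousLinearMap.apply_le_of_abs_le_abs {f : X →L[ℝ] ℝ} {x z : X}
    (hfx : f x = ‖f‖ * ‖x‖) (hz : |z| ≤ |x|) : f z ≤ f x :=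
  calc f z ≤ ‖f‖ * ‖z‖ := (le_abs_self _).trans (f.le_opNorm z)
    _ ≤ ‖f‖ * ‖x‖ := mul_le_mul_of_nonneg_left (norm_le_norm_of_abs_le_abs hz) (norm_nonneg f)
    _ = f x := hfx.symm

variable [IsOrderedAddMonoid X]

theorem ContinuousLinearMap.apply_nonpos_of_le_negPart {f : X →L[ℝ] ℝ} {x y : X}
    (hfx : f x = ‖f‖ * ‖x‖) (hy0 : 0 ≤ y) (hy : y ≤ x⁻) : f y ≤ 0 := by
  have := f.apply_le_of_abs_le_abs hfx (abs_add_add_le_abs_of_le_negPart hy0 hy)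
  rw [map_add, map_add] at this
  linarith

theorem ContinuousLinearMap.apply_nonneg_of_le_posPart {f : X →L[ℝ] ℝ} {x y : X}
    (hfx : f x = ‖f‖ * ‖x‖) (hy0 : 0 ≤ y) (hy : y ≤ x⁺) : 0 ≤ f y := by
  have hfx' : (-f) (-x) = ‖-f‖ * ‖-x‖ := by simpa using hfx
  have := (-f).apply_nonpos_of_le_negPart hfx' hy0 (by rwa [negPart_neg])
  simpa using this

end NormedLattice

theorem stmt0_general (X : Type*) [NormedAddCommGroup X] [Lattice X] [IsOrderedAddMonoid X]
    [HasSolidNorm X] [NormedSpace ℝ X]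
    (x : X) (hx : ‖x‖ = 1) (f : X →L[ℝ] ℝ) (hf : ‖f‖ = 1) (hfx : f x = 1) :
    (∀ y : X, 0 ≤ y → y ≤ (-x) ⊔ 0 → f y ≤ 0) ∧
    (∀ y : X, 0 ≤ y → y ≤ x ⊔ 0 → 0 ≤ f y) := by
  have hnorming : f x = ‖f‖ * ‖x‖ := by rw [hfx, hf, hx, one_mul]
  exact ⟨fun y hy0 hy => f.apply_nonpos_of_le_negPart hnorming hy0 hy,
    fun y hy0 hy => f.apply_nonneg_of_le_posPart hnorming hy0 hy⟩

/-- In a Banach lattice `X`, if `x ∈ S_X`, `x* ∈ S_{X*}` and `x*(x) = 1`,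
then `x*` is nonpositive on the order interval `[0, x⁻]` and nonnegative on `[0, x⁺]`
(equivalently, by the Riesz–Kantorovich formulas, `x*⁺(x⁻) = 0 = x*⁻(x⁺)`). -/
theorem stmt0 (X : Type*) [NormedAddCommGroup X] [Lattice X] [IsOrderedAddMonoid X]
    [HasSolidNorm X] [NormedSpace ℝ X]
    [PosSMulStrictMono ℝ X] [CompleteSpace X]
    (x : X) (hx : ‖x‖ = 1) (f : X →L[ℝ] ℝ) (hf : ‖f‖ = 1) (hfx : f x = 1) :
    (∀ y : X, 0 ≤ y → y ≤ (-x) ⊔ 0 → f y ≤ 0) ∧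
    (∀ y : X, 0 ≤ y → y ≤ x ⊔ 0 → 0 ≤ f y) :=
  stmt0_general X x hx f hf hfx
end

section
/- Let X be a Banach lattice and 0 < ε < 1. If x ∈ X satisfies x ≥ 0 and ‖x‖ = 1, and x* is a positive continuous linear functional on X with ‖x*‖ = 1 such that x*(x) > 1 − ε²/2, then there exist y ∈ X with y ≥ 0 and ‖y‖ = 1, and a positive continuous linear functional y* on X with ‖y*‖ = 1, such that y*(y) = 1, ‖y − x‖ < ε and ‖y* − x*‖ < ε. -/
/-!
Apply Ekeland's variational principle to `z ↦ ‖z‖ - x*(z)` on the closed positive cone, starting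
at `x`, with a constant `c` chosen so that `2 (1 - x*(x)) / ε < c < ε`. This gives `y ≥ 0` with
`c ‖y - x‖ ≤ 1 - x*(x)` at which `z ↦ ‖z‖ - x*(z) + c ‖z - y‖` is minimal on the cone.
By Hahn–Banach there is a linear functional `y*` below the infimal convolution of the sublinear
functionals `z ↦ ‖z⁺‖` and `x* + c ‖·‖` with `y*(y)` equal to its value at `y`. Minimality of `y`,
together with `x*(z) ≤ x*(z⁺)` and `|z⁺ - y| ≤ |z - y|`, makes that value `‖y‖`. Being dominated by
`‖(·)⁺‖`, `y*` is positive of norm at most one, and being dominated by `x* + c ‖·‖` it is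
`c`-close to `x*`. Normalizing `y` at most doubles its distance to `x`.
-/

open Filter Topology Set

section Ekeland

variable {E : Type*} [MetricSpace E] {h : E → ℝ} {c : ℝ}

theorem add_mul_dist_le_trans (hc : 0 ≤ c) {z w v : E} (hzw : h z + c * dist z w ≤ h w)
    (hwv : h w + c * dist w v ≤ h v) : h z + c * dist z v ≤ h v := by
  have := mul_le_mul_of_nonneg_left (dist_triangle z w v) hc
  linarith

theorem add_mul_dist_le_of_le (hc : 0 ≤ c) {u : ℕ → E}
    (hu : ∀ n, h (u (n + 1)) + c * dist (u (n + 1)) (u n) ≤ h (u n)) {m n : ℕ} (hmn : m ≤ n) :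
    h (u n) + c * dist (u n) (u m) ≤ h (u m) := by
  induction n, hmn using Nat.le_induction with
  | base => simp
  | succ n _ ih => exact add_mul_dist_le_trans hc (hu n) ih

theorem exists_tendsto_of_add_mul_dist_le [CompleteSpace E] (hh : Continuous h)
    (hbdd : BddBelow (range h)) (hc : 0 < c) {u : ℕ → E}
    (hu : ∀ n, h (u (n + 1)) + c * dist (u (n + 1)) (u n) ≤ h (u n)) :
    ∃ y, Tendsto u atTop (𝓝 y) ∧ ∀ n, h y + c * dist y (u n) ≤ h (u n) := by
  obtain ⟨b, hb⟩ := hbdd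
  have hdist : ∀ n, dist (u n) (u (n + 1)) ≤ (h (u n) - h (u (n + 1))) / c := fun n => by
    rw [le_div_iff₀ hc, dist_comm]
    linarith [hu n]
  have hsum : Summable fun n => h (u n) - h (u (n + 1)) := by
    refine summable_of_sum_range_le (c := h (u 0) - b)
      (fun n => by linarith [hu n, mul_nonneg hc.le (dist_nonneg (x := u (n + 1)) (y := u n))])
      fun n => ?_
    rw [Finset.sum_range_sub']
    linarith [hb (mem_range_self (u n))]
  obtain ⟨y, hy⟩ := cauchySeq_tendsto_of_complete
    (cauchySeq_of_dist_le_of_summable _ hdist (hsum.div_const c))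
  refine ⟨y, hy, fun n => ?_⟩
  have hclosed : IsClosed {z | h z + c * dist z (u n) ≤ h (u n)} :=
    isClosed_le (hh.add (continuous_const.mul (continuous_id.dist continuous_const)))
      continuous_const
  exact hclosed.mem_of_tendsto hy
    (eventually_atTop.2 ⟨n, fun m hm => add_mul_dist_le_of_le hc.le hu hm⟩)

theorem Continuous.exists_ekeland [CompleteSpace E] (hh : Continuous h)
    (hbdd : BddBelow (range h)) (hc : 0 < c) (x : E) :
    ∃ y, h y + c * dist y x ≤ h x ∧ ∀ z, h y ≤ h z + c * dist z y := by
  -- `u (n + 1)` minimizes `h`, up to `1 / (n + 1)`, on `{z | h z + c * dist z (u n) ≤ h (u n)}`.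
  have hnext : ∀ (n : ℕ) (w : E), ∃ v, h v + c * dist v w ≤ h w ∧
      ∀ z, h z + c * dist z w ≤ h w → h v ≤ h z + 1 / (n + 1) := by
    intro n w
    set S := {z | h z + c * dist z w ≤ h w}
    have hS : (h '' S).Nonempty := ⟨h w, w, by simp [S], rfl⟩
    obtain ⟨_, ⟨v, hv, rfl⟩, hlt⟩ := Real.lt_sInf_add_pos hS Nat.one_div_pos_of_nat
    refine ⟨v, hv, fun z hz => hlt.le.trans ?_⟩
    gcongr
    exact csInf_le (hbdd.mono (image_subset_range h S)) (mem_image_of_mem h hz)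
  choose next hnext_le hnext_min using hnext
  let u : ℕ → E := fun n => Nat.rec (motive := fun _ => E) x next n
  obtain ⟨y, hy, hyu⟩ := exists_tendsto_of_add_mul_dist_le hh hbdd hc (u := u)
    fun n => hnext_le n (u n)
  refine ⟨y, hyu 0, fun z => ?_⟩
  by_contra! hz
  have hzu : ∀ n : ℕ, h (u (n + 1)) ≤ h z + 1 / (n + 1) := fun n =>
    hnext_min n (u n) z (add_mul_dist_le_trans hc.le hz.le (hyu n))
  have hyz : h y ≤ h z := by
    refine le_of_tendsto_of_tendsto' ((hh.tendsto y).comp (hy.comp (tendsto_add_atTop_nat 1)))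
      ?_ hzu
    simpa using tendsto_const_nhds.add (tendsto_one_div_add_atTop_nhds_zero_nat (𝕜 := ℝ))
  linarith [mul_nonneg hc.le (dist_nonneg (x := z) (y := y))]

end Ekeland

section Sublinear

variable {E : Type*} [AddCommGroup E] [Module ℝ E]

structure IsSublinear (p : E → ℝ) : Prop where
  map_smul : ∀ c : ℝ, 0 < c → ∀ x, p (c • x) = c * p x
  map_add_le : ∀ x y, p (x + y) ≤ p x + p y

noncomputable def infConv (p q : E → ℝ) (x : E) : ℝ := ⨅ z, p z + q (x - z)

variable {p q : E → ℝ}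

namespace IsSublinear

theorem map_zero (hp : IsSublinear p) : p 0 = 0 := by
  have := hp.map_smul 2 two_pos 0
  rw [smul_zero] at this
  linarith

theorem mul_le_map_smul (hp : IsSublinear p) (t : ℝ) (x : E) : t * p x ≤ p (t • x) := by
  rcases lt_trichotomy t 0 with ht | rfl | ht
  · have h := hp.map_add_le (t • x) ((-t) • x)
    rw [← add_smul, add_neg_cancel, zero_smul, hp.map_zero, hp.map_smul _ (neg_pos.2 ht)] at h
    linarith
  · simp [hp.map_zero]
  · exact (hp.map_smul t ht x).ge

theorem exists_linearMap_le_eq (hp : IsSublinear p) (y : E) :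
    ∃ g : E →ₗ[ℝ] ℝ, (∀ x, g x ≤ p x) ∧ g y = p y := by
  have hker : ∀ t : ℝ, t • y = 0 → t • p y = 0 := by
    intro t ht
    rcases smul_eq_zero.1 ht with rfl | rfl
    · exact zero_smul ℝ _
    · rw [hp.map_zero, smul_zero]
  set g₀ := LinearPMap.mkSpanSingleton' (σ := RingHom.id ℝ) y (p y) hker
  have hg₀ : ∀ v : g₀.domain, g₀ v ≤ p v := by
    rintro ⟨_, hv⟩
    obtain ⟨t, rfl⟩ := Submodule.mem_span_singleton.1 hv
    rw [LinearPMap.mkSpanSingleton'_apply]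
    exact hp.mul_le_map_smul t y
  obtain ⟨g, hg_ext, hg_le⟩ := exists_extension_of_le_sublinear g₀ p hp.map_smul hp.map_add_le hg₀
  exact ⟨g, hg_le, (hg_ext ⟨y, Submodule.mem_span_singleton_self y⟩).trans
    (LinearPMap.mkSpanSingleton'_apply_self y (p y) hker _)⟩

end IsSublinear

theorem bddBelow_range_add_sub (ℓ : E →ₗ[ℝ] ℝ) (hp : ∀ z, ℓ z ≤ p z) (hq : ∀ z, ℓ z ≤ q z)
    (x : E) : BddBelow (range fun z => p z + q (x - z)) := by
  refine ⟨ℓ x, ?_⟩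
  rintro _ ⟨z, rfl⟩
  have := ℓ.map_sub x z
  linarith [hp z, hq (x - z)]

theorem infConv_le (ℓ : E →ₗ[ℝ] ℝ) (hp : ∀ z, ℓ z ≤ p z) (hq : ∀ z, ℓ z ≤ q z) (x z : E) :
    infConv p q x ≤ p z + q (x - z) :=
  ciInf_le (bddBelow_range_add_sub ℓ hp hq x) z

theorem IsSublinear.infConv (hp : IsSublinear p) (hq : IsSublinear q) (ℓ : E →ₗ[ℝ] ℝ)
    (hℓp : ∀ z, ℓ z ≤ p z) (hℓq : ∀ z, ℓ z ≤ q z) : IsSublinear (infConv p q) where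
  map_smul c hc x := by
    have hsurj : Function.Surjective fun z : E => c • z :=
      fun z => ⟨c⁻¹ • z, smul_inv_smul₀ hc.ne' z⟩
    rw [_root_.infConv, _root_.infConv, Real.mul_iInf_of_nonneg hc.le, ← hsurj.iInf_comp]
    congr 1
    ext z
    rw [← smul_sub, hp.map_smul c hc, hq.map_smul c hc, mul_add]
  map_add_le x y := by
    refine le_ciInf_add_ciInf fun z w => ?_
    refine (infConv_le ℓ hℓp hℓq (x + y) (z + w)).trans ?_
    have hsub : x + y - (z + w) = (x - z) + (y - w) := by abel
    rw [hsub]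
    linarith [hp.map_add_le z w, hq.map_add_le (x - z) (y - w)]

end Sublinear

theorem isSublinear_add_mul_norm {E : Type*} [SeminormedAddCommGroup E] [NormedSpace ℝ E]
    (ℓ : E →ₗ[ℝ] ℝ) {c : ℝ} (hc : 0 ≤ c) : IsSublinear fun z : E => ℓ z + c * ‖z‖ where
  map_smul t ht z := by
    rw [map_smul, norm_smul, Real.norm_of_nonneg ht.le, smul_eq_mul]
    ring
  map_add_le z w := by
    rw [map_add]
    nlinarith [norm_add_le z w]

theorem LinearMap.abs_apply_le_of_forall_apply_le {E : Type*} [SeminormedAddCommGroup E]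
    [Module ℝ E] (g : E →ₗ[ℝ] ℝ) {M : ℝ} (hg : ∀ z, g z ≤ M * ‖z‖) (z : E) :
    |g z| ≤ M * ‖z‖ := by
  have := hg (-z)
  rw [map_neg, norm_neg] at this
  exact abs_le.2 ⟨by linarith, hg z⟩

theorem ContinuousLinearMap.apply_le_norm_of_norm_le_one {E : Type*} [SeminormedAddCommGroup E]
    [NormedSpace ℝ E] {f : E →L[ℝ] ℝ} (hf : ‖f‖ ≤ 1) (z : E) : f z ≤ ‖z‖ :=
  (le_abs_self _).trans (by simpa using f.le_of_opNorm_le hf z)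

theorem norm_inv_norm_smul_sub_le {E : Type*} [NormedAddCommGroup E] [NormedSpace ℝ E] {x : E}
    (hx : ‖x‖ = 1) (y : E) : ‖‖y‖⁻¹ • y - x‖ ≤ 2 * ‖y - x‖ := by
  rcases eq_or_ne y 0 with rfl | hy
  · simp [hx]
  have hny : ‖‖y‖⁻¹ • y - y‖ = |‖x‖ - ‖y‖| := by
    have hsmul : ‖y‖⁻¹ • y - y = (‖y‖⁻¹ - 1) • y := by rw [sub_smul, one_smul]
    rw [hsmul, norm_smul, Real.norm_eq_abs, ← abs_norm y, ← abs_mul, abs_norm, sub_mul,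
      inv_mul_cancel₀ (norm_ne_zero_iff.2 hy), hx, one_mul, abs_sub_comm]
  calc ‖‖y‖⁻¹ • y - x‖ ≤ ‖‖y‖⁻¹ • y - y‖ + ‖y - x‖ := norm_sub_le_norm_sub_add_norm_sub _ _ _
    _ ≤ ‖y - x‖ + ‖y - x‖ := by
        rw [hny, norm_sub_rev y x]
        gcongr
        exact abs_norm_sub_norm_le x y
    _ = 2 * ‖y - x‖ := by ring

section NormedLattice

variable {X : Type*} [NormedAddCommGroup X] [Lattice X] [HasSolidNorm X] [IsOrderedAddMonoid X]

theorem norm_le_norm_of_nonneg_of_le {a b : X} (ha : 0 ≤ a) (hab : a ≤ b) : ‖a‖ ≤ ‖b‖ :=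
  norm_le_norm_of_abs_le_abs (by rwa [abs_of_nonneg ha, abs_of_nonneg (ha.trans hab)])

theorem norm_posPart_le (z : X) : ‖z⁺‖ ≤ ‖z‖ :=
  norm_le_norm_of_abs_le_abs
    (by rw [abs_of_nonneg (posPart_nonneg z)]; exact sup_le (le_abs_self z) (abs_nonneg z))

theorem norm_posPart_sub_le {y : X} (hy : 0 ≤ y) (z : X) : ‖z⁺ - y‖ ≤ ‖z - y‖ :=
  norm_le_norm_of_abs_le_abs
    (by simpa [posPart_def, sup_of_le_left hy] using abs_sup_sub_sup_le_abs z y 0)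

variable [NormedSpace ℝ X]

theorem isSublinear_norm_posPart [PosSMulStrictMono ℝ X] : IsSublinear fun z : X => ‖z⁺‖ where
  map_smul c hc z := by
    have hsmul : (c • z)⁺ = c • z⁺ := by
      have := (OrderIso.smulRight (β := X) hc).map_sup z 0
      rw [OrderIso.smulRight_apply, OrderIso.smulRight_apply, OrderIso.smulRight_apply,
        smul_zero] at this
      rw [posPart_def, posPart_def, this]
    rw [hsmul, norm_smul, Real.norm_of_nonneg hc.le]
  map_add_le z w := by
    refine (norm_le_norm_of_nonneg_of_le (posPart_nonneg _) ?_).trans (norm_add_le _ _)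
    exact sup_le (add_le_add (le_posPart z) (le_posPart w))
      (add_nonneg (posPart_nonneg z) (posPart_nonneg w))

theorem exists_pos_dual_vector_of_forall_le [PosSMulStrictMono ℝ X] {f : X →L[ℝ] ℝ}
    (hf : ∀ z, 0 ≤ z → 0 ≤ f z) (hf1 : ‖f‖ ≤ 1) {c : ℝ} (hc : 0 ≤ c) {y : X} (hy : 0 ≤ y)
    (hmin : ∀ z, 0 ≤ z → ‖y‖ - f y ≤ ‖z‖ - f z + c * ‖z - y‖) :
    ∃ g : X →L[ℝ] ℝ, (∀ z, 0 ≤ z → 0 ≤ g z) ∧ ‖g‖ ≤ 1 ∧ g y = ‖y‖ ∧ ‖g - f‖ ≤ c := by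
  set p : X → ℝ := fun z => ‖z⁺‖
  set q : X → ℝ := fun z => f z + c * ‖z‖
  have hfz : ∀ z, f z ≤ f z⁺ := fun z => by
    linarith [f.map_sub z⁺ z, hf _ (sub_nonneg.2 (le_posPart z))]
  have hfp : ∀ z, (f : X →ₗ[ℝ] ℝ) z ≤ p z := fun z =>
    (hfz z).trans (f.apply_le_norm_of_norm_le_one hf1 _)
  have hfq : ∀ z, (f : X →ₗ[ℝ] ℝ) z ≤ q z := fun z => by
    simpa [q] using mul_nonneg hc (norm_nonneg z)
  have hN : IsSublinear (infConv p q) :=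
    isSublinear_norm_posPart.infConv (isSublinear_add_mul_norm _ hc) _ hfp hfq
  obtain ⟨g, hg_le, hgy⟩ := hN.exists_linearMap_le_eq y
  have hgp : ∀ z, g z ≤ ‖z⁺‖ := fun z =>
    (hg_le z).trans ((infConv_le _ hfp hfq z z).trans_eq (by simp [p, q]))
  have hgq : ∀ z, g z ≤ f z + c * ‖z‖ := fun z =>
    (hg_le z).trans ((infConv_le _ hfp hfq z 0).trans_eq (by simp [p, q]))
  have hy_le : ‖y‖ ≤ infConv p q y := le_ciInf fun z => by
    show ‖y‖ ≤ ‖z⁺‖ + (f (y - z) + c * ‖y - z‖)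
    have := hmin z⁺ (posPart_nonneg z)
    rw [map_sub, norm_sub_rev y z]
    linarith [hfz z, mul_le_mul_of_nonneg_left (norm_posPart_sub_le hy z) hc]
  have hg_abs : ∀ z, |g z| ≤ 1 * ‖z‖ :=
    g.abs_apply_le_of_forall_apply_le fun z => by linarith [hgp z, norm_posPart_le z]
  set G := g.mkContinuous 1 hg_abs
  refine ⟨G, fun z hz => ?_, G.opNorm_le_bound zero_le_one hg_abs, ?_, ?_⟩
  · have := hgp (-z)
    rw [map_neg, posPart_neg, negPart_eq_zero.2 hz, norm_zero] at this
    exact neg_nonpos.1 this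
  · have hgy_le : g y ≤ ‖y‖ := by simpa [posPart_of_nonneg hy] using hgp y
    exact le_antisymm hgy_le (hy_le.trans_eq hgy.symm)
  · have hgf : ∀ z, (g - (f : X →ₗ[ℝ] ℝ)) z ≤ c * ‖z‖ := fun z => by
      simp only [LinearMap.sub_apply, ContinuousLinearMap.coe_coe]
      linarith [hgq z]
    refine (G - f).opNorm_le_bound hc fun z => ?_
    simpa [G] using (g - (f : X →ₗ[ℝ] ℝ)).abs_apply_le_of_forall_apply_le hgf z

theorem exists_nonneg_pos_dual_vector_near [CompleteSpace X] [PosSMulStrictMono ℝ X] {f : X →L[ℝ] ℝ}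
    (hf : ∀ z, 0 ≤ z → 0 ≤ f z) (hf1 : ‖f‖ ≤ 1) {c : ℝ} (hc : 0 < c) {x : X} (hx : 0 ≤ x) :
    ∃ (y : X) (g : X →L[ℝ] ℝ), 0 ≤ y ∧ (∀ z, 0 ≤ z → 0 ≤ g z) ∧ ‖g‖ ≤ 1 ∧ g y = ‖y‖ ∧
      c * ‖y - x‖ ≤ ‖x‖ - f x ∧ ‖g - f‖ ≤ c := by
  have : CompleteSpace (Ici (0 : X)) := isClosed_Ici.completeSpace_coe
  have hfz := f.apply_le_norm_of_norm_le_one hf1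
  obtain ⟨⟨y, hy⟩, hyx, hmin⟩ := Continuous.exists_ekeland
    (h := fun z : Ici (0 : X) => ‖(z : X)‖ - f z) (by fun_prop)
    ⟨0, by rintro _ ⟨z, rfl⟩; linarith [hfz z]⟩ hc ⟨x, hx⟩
  obtain ⟨g, hg_pos, hg1, hgy, hgf⟩ := exists_pos_dual_vector_of_forall_le hf hf1 hc.le hy
    fun z hz => by simpa [Subtype.dist_eq, dist_eq_norm] using hmin ⟨z, hz⟩
  refine ⟨y, g, hy, hg_pos, hg1, hgy, ?_, hgf⟩
  simp only [Subtype.dist_eq, dist_eq_norm] at hyx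
  linarith [hfz y]

end NormedLattice

/-- Bishop–Phelps–Bollobás theorem for positive elements and positive
functionals in a Banach lattice. -/
theorem stmt1 (X : Type*) [NormedAddCommGroup X] [Lattice X] [HasSolidNorm X]
    [IsOrderedAddMonoid X] [NormedSpace ℝ X]
    [PosSMulStrictMono ℝ X] [CompleteSpace X]
    (ε : ℝ) (hε0 : 0 < ε) (hε1 : ε < 1)
    (x : X) (hx0 : 0 ≤ x) (hx : ‖x‖ = 1)
    (f : X →L[ℝ] ℝ) (hfpos : ∀ z : X, 0 ≤ z → 0 ≤ f z) (hf : ‖f‖ = 1)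
    (hfx : 1 - ε ^ 2 / 2 < f x) :
    ∃ (y : X) (g : X →L[ℝ] ℝ), 0 ≤ y ∧ ‖y‖ = 1 ∧
      (∀ z : X, 0 ≤ z → 0 ≤ g z) ∧ ‖g‖ = 1 ∧
      g y = 1 ∧ ‖y - x‖ < ε ∧ ‖g - f‖ < ε := by
  have hfx1 : 0 ≤ 1 - f x := by linarith [f.apply_le_norm_of_norm_le_one hf.le x]
  obtain ⟨c, hfx1c, hcε⟩ : ∃ c, 2 * (1 - f x) / ε < c ∧ c < ε :=
    exists_between (by rw [div_lt_iff₀ hε0]; nlinarith)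
  have hc : 0 < c := lt_of_le_of_lt (by positivity) hfx1c
  obtain ⟨y, g, hy0, hg_pos, hg1, hgy, hyx, hgf⟩ :=
    exists_nonneg_pos_dual_vector_near hfpos hf.le hc hx0
  have hyx' : 2 * ‖y - x‖ < ε := by
    rw [div_lt_iff₀ hε0] at hfx1c
    rw [hx] at hyx
    nlinarith
  have hy : y ≠ 0 := by
    rintro rfl
    rw [zero_sub, norm_neg, hx] at hyx'
    linarith
  have hgu : g (‖y‖⁻¹ • y) = 1 := by
    rw [map_smul, smul_eq_mul, hgy, inv_mul_cancel₀ (norm_ne_zero_iff.2 hy)]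
  have hu : ‖‖y‖⁻¹ • y‖ = 1 := norm_smul_inv_norm hy
  refine ⟨‖y‖⁻¹ • y, g, smul_nonneg (by positivity) hy0, hu, hg_pos, ?_, hgu,
    (norm_inv_norm_smul_sub_le hx y).trans_lt hyx', hgf.trans_lt hcε⟩
  refine le_antisymm hg1 ?_
  have := g.le_opNorm (‖y‖⁻¹ • y)
  rwa [hgu, hu, mul_one, norm_one] at this
end

section
/- Let X and Y be finite-dimensional Banach lattices. For every ε > 0 there exists δ > 0 such that whenever S : X → Y is a positive bounded linear operator with ‖S‖ = 1, there is a positive bounded linear operator T : X → Y with ‖T‖ = 1 such that (i) ‖T − S‖ < ε, and (ii) for every x₀ ∈ X with ‖x₀‖ = 1 and ‖S(x₀)‖ > 1 − δ, there exists u₀ ∈ X with ‖u₀‖ = 1, ‖T(u₀)‖ = 1 and ‖u₀ − x₀‖ < ε. -/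
/-!
For a single operator `S` with `‖S‖ ≤ 1` on a finite-dimensional space, the unit vectors at
distance at least `ε` from every unit vector on which `S` attains norm `1` form a compact set on
which `‖S ·‖ < 1`; the gap below `1` is a `δ` that works for `S`. The positive operators of norm
one form a compact set, so finitely many balls around such operators, each of radius at most
half its own `δ`, cover it; any `δ` below the least of these radii works for all of them at once,
with `T` the centre of a ball containing `S`.
-/

open Metric

section

variable {X Y : Type*} [NormedAddCommGroup X] [NormedSpace ℝ X] [FiniteDimensional ℝ X]
  [NormedAddCommGroup Y] [NormedSpace ℝ Y]

theorem ContinuousLinearMap.exists_pos_forall_exists_norming_near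
    (S : X →L[ℝ] Y) (hS : ‖S‖ ≤ 1) {ε : ℝ} (hε : 0 < ε) :
    ∃ δ > 0, ∀ x : X, ‖x‖ = 1 → 1 - δ < ‖S x‖ →
      ∃ u : X, ‖u‖ = 1 ∧ ‖S u‖ = 1 ∧ ‖u - x‖ < ε := by
  set A : Set X := sphere 0 1 ∩ {x | ∀ u : X, ‖u‖ = 1 → ‖S u‖ = 1 → ε ≤ ‖u - x‖}
  have hA : IsCompact A := by
    refine (isCompact_sphere 0 1).inter_right ?_
    simp only [Set.ofPred_forall]
    exact isClosed_iInter fun u => isClosed_iInter fun _ => isClosed_iInter fun _ =>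
      isClosed_le continuous_const (by fun_prop)
  have hgap : ∀ x ∈ A, 0 < 1 - ‖S x‖ := by
    rintro x ⟨hx, hfar⟩
    rw [mem_sphere_zero_iff_norm] at hx
    have hle : ‖S x‖ ≤ 1 := by simpa [hx] using S.le_of_opNorm_le hS x
    refine sub_pos.2 (hle.lt_of_ne fun h => ?_)
    simpa [hε.not_ge] using hfar x hx h
  obtain ⟨δ, hδ, hδA⟩ := hA.exists_forall_le' (by fun_prop) hgap
  refine ⟨δ, hδ, fun x hx hSx => ?_⟩
  have hxA : x ∉ A := fun hxA => by linarith [hδA x hxA]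
  simpa [A, hx] using hxA

theorem IsCompact.exists_pos_forall_exists_norming_near {K : Set (X →L[ℝ] Y)}
    (hK : IsCompact K) (hK1 : ∀ S ∈ K, ‖S‖ ≤ 1) {ε : ℝ} (hε : 0 < ε) :
    ∃ δ > 0, ∀ S ∈ K, ∃ T ∈ K, ‖T - S‖ < ε ∧ ∀ x : X, ‖x‖ = 1 → 1 - δ < ‖S x‖ →
      ∃ u : X, ‖u‖ = 1 ∧ ‖T u‖ = 1 ∧ ‖u - x‖ < ε := by
  choose! d hd hdT using fun T (hT : T ∈ K) =>
    T.exists_pos_forall_exists_norming_near (hK1 T hT) hε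
  set r : (X →L[ℝ] Y) → ℝ := fun T => min ε (d T / 2)
  obtain ⟨t, htK, hcover⟩ := hK.elim_nhds_subcover (fun T => ball T (r T)) fun T hT =>
    ball_mem_nhds T (lt_min hε (half_pos (hd T hT)))
  obtain ⟨δ, hδ, hδr⟩ := Finset.exists_between' {0} (t.image r) (by
    simp only [Finset.mem_singleton, Finset.mem_image]
    rintro _ rfl _ ⟨T, hT, rfl⟩
    exact lt_min hε (half_pos (hd T (htK T hT))))
  refine ⟨δ, hδ 0 (Finset.mem_singleton_self 0), fun S hS => ?_⟩
  obtain ⟨T, hTt, hST⟩ := Set.mem_iUnion₂.1 (hcover hS)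
  have hTS : ‖T - S‖ < r T := by rwa [mem_ball, dist_eq_norm'] at hST
  refine ⟨T, htK T hTt, hTS.trans_le (min_le_left _ _), fun x hx hSx =>
    hdT T (htK T hTt) x hx ?_⟩
  have hδT : δ < r T := hδr _ (Finset.mem_image_of_mem r hTt)
  have hSxT : ‖S x‖ ≤ ‖T x‖ + ‖T - S‖ :=
    calc ‖S x‖ ≤ ‖T x‖ + ‖S x - T x‖ := norm_le_norm_add_norm_sub' _ _
      _ ≤ ‖T x‖ + ‖T - S‖ := by rw [norm_sub_rev T S]; simpa [hx] using (S - T).le_opNorm x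
  linarith [min_le_right ε (d T / 2)]

variable (X Y) in
theorem isCompact_setOf_nonneg_apply_and_norm_eq_one [Preorder X] [Preorder Y]
    [ClosedIciTopology Y] [FiniteDimensional ℝ Y] :
    IsCompact {S : X →L[ℝ] Y | (∀ x : X, 0 ≤ x → 0 ≤ S x) ∧ ‖S‖ = 1} := by
  refine (isCompact_sphere (0 : X →L[ℝ] Y) 1).of_isClosed_subset ?_ fun S hS => by simp [hS.2]
  rw [Set.ofPred_and]
  refine IsClosed.inter ?_ (isClosed_eq continuous_norm continuous_const)
  simp only [Set.ofPred_forall]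
  exact isClosed_iInter fun x => isClosed_iInter fun _ =>
    isClosed_Ici.preimage (ContinuousLinearMap.apply ℝ Y x).continuous

end

theorem stmt4_general (X Y : Type*)
    [NormedAddCommGroup X] [Lattice X]
    [NormedSpace ℝ X]
    [NormedAddCommGroup Y] [Lattice Y] [IsOrderedAddMonoid Y] [HasSolidNorm Y]
    [NormedSpace ℝ Y]
    [FiniteDimensional ℝ X] [FiniteDimensional ℝ Y]
    (ε : ℝ) (hε : 0 < ε) :
    ∃ δ : ℝ, 0 < δ ∧
      ∀ S : X →L[ℝ] Y, (∀ x : X, 0 ≤ x → 0 ≤ S x) → ‖S‖ = 1 →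
        ∃ T : X →L[ℝ] Y, (∀ x : X, 0 ≤ x → 0 ≤ T x) ∧ ‖T‖ = 1 ∧
          ‖T - S‖ < ε ∧
          ∀ x₀ : X, ‖x₀‖ = 1 → 1 - δ < ‖S x₀‖ →
            ∃ u₀ : X, ‖u₀‖ = 1 ∧ ‖T u₀‖ = 1 ∧ ‖u₀ - x₀‖ < ε := by
  obtain ⟨δ, hδ, hK⟩ := IsCompact.exists_pos_forall_exists_norming_near
    (isCompact_setOf_nonneg_apply_and_norm_eq_one X Y) (fun S hS => hS.2.le) hε
  refine ⟨δ, hδ, fun S hSpos hS => ?_⟩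
  obtain ⟨T, ⟨hTpos, hT⟩, hTS, hnear⟩ := hK S ⟨hSpos, hS⟩
  exact ⟨T, hTpos, hT, hTS, hnear⟩

/-- Finite-dimensional version of the Bishop–Phelps–Bollobás property for
positive operators between finite-dimensional Banach lattices, where the operator `T` can be
chosen uniformly for all points `x₀` at which `S` almost attains its norm. -/
theorem stmt4 (X Y : Type*)
    [NormedAddCommGroup X] [Lattice X] [IsOrderedAddMonoid X] [HasSolidNorm X]
    [NormedSpace ℝ X] [PosSMulStrictMono ℝ X] [PosSMulReflectLT ℝ X]
    [NormedAddCommGroup Y] [Lattice Y] [IsOrderedAddMonoid Y] [HasSolidNorm Y]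
    [NormedSpace ℝ Y] [PosSMulStrictMono ℝ Y] [PosSMulReflectLT ℝ Y]
    [FiniteDimensional ℝ X] [FiniteDimensional ℝ Y]
    (ε : ℝ) (hε : 0 < ε) :
    ∃ δ : ℝ, 0 < δ ∧
      ∀ S : X →L[ℝ] Y, (∀ x : X, 0 ≤ x → 0 ≤ S x) → ‖S‖ = 1 →
        ∃ T : X →L[ℝ] Y, (∀ x : X, 0 ≤ x → 0 ≤ T x) ∧ ‖T‖ = 1 ∧
          ‖T - S‖ < ε ∧
          ∀ x₀ : X, ‖x₀‖ = 1 → 1 - δ < ‖S x₀‖ →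
            ∃ u₀ : X, ‖u₀‖ = 1 ∧ ‖T u₀‖ = 1 ∧ ‖u₀ - x₀‖ < ε :=
  stmt4_general X Y ε hε
end

section
/- Every finite-dimensional Banach lattice has the Bishop–Phelps–Bollobás property for positive functionals. -/
/-!
On the compact set of pairs `(f, x)` with `f` a positive norm-one functional and `‖x‖ = 1`,
the evaluation `f x` is continuous and bounded by `1`. Outside an `ε`-neighbourhood of the
pairs where it equals `1`, it therefore attains a maximum `< 1` (or the set is empty), and
any `η` below the gap works.
-/

/-- The *Bishop–Phelps–Bollobás property for positive functionals* of a Banach lattice. -/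
def BPBppPositive (X : Type*) [NormedAddCommGroup X] [Lattice X] [IsOrderedAddMonoid X]
    [HasSolidNorm X] [NormedSpace ℝ X] : Prop :=
  ∀ ε : ℝ, 0 < ε → ε < 1 → ∃ η : ℝ, 0 < η ∧ η < ε ∧
    ∀ f : X →L[ℝ] ℝ, (∀ z : X, 0 ≤ z → 0 ≤ f z) → ‖f‖ = 1 →
      ∀ x₀ : X, ‖x₀‖ = 1 → 1 - η < f x₀ →
        ∃ (y : X) (g : X →L[ℝ] ℝ), ‖y‖ = 1 ∧
          (∀ z : X, 0 ≤ z → 0 ≤ g z) ∧ ‖g‖ = 1 ∧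
          g y = 1 ∧ ‖y - x₀‖ < ε ∧ ‖g - f‖ < ε

open Metric Set

/-- Approximate maximizers of a continuous function on a compact set are uniformly close to
exact maximizers. -/
theorem IsCompact.exists_forall_dist_lt_of_sub_lt {α : Type*} [PseudoMetricSpace α]
    {K : Set α} (hK : IsCompact K) {φ : α → ℝ} (hφ : ContinuousOn φ K) {c : ℝ}
    (hφc : ∀ p ∈ K, φ p ≤ c) {ε : ℝ} (hε : 0 < ε) :
    ∃ η > 0, ∀ p ∈ K, c - η < φ p → ∃ q ∈ K, φ q = c ∧ dist p q < ε := by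
  set far := K ∩ (thickening ε (K ∩ φ ⁻¹' {c}))ᶜ
  have hfar : IsCompact far := hK.inter_right isOpen_thickening.isClosed_compl
  have hnear : ∀ p ∈ K, p ∉ far → ∃ q ∈ K, φ q = c ∧ dist p q < ε := fun p hpK hp => by
    obtain ⟨q, ⟨hqK, hqc⟩, hpq⟩ := mem_thickening_iff.mp (by simpa [far, hpK] using hp)
    exact ⟨q, hqK, hqc, hpq⟩
  rcases far.eq_empty_or_nonempty with hempty | hne
  · exact ⟨1, one_pos, fun p hpK _ => hnear p hpK (by simp [hempty])⟩
  obtain ⟨p₀, hp₀, hmax⟩ := hfar.exists_isMaxOn hne (hφ.mono inter_subset_left)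
  have hgap : φ p₀ < c := by
    refine (hφc p₀ hp₀.1).lt_of_ne fun h => hp₀.2 ?_
    exact self_subset_thickening hε _ ⟨hp₀.1, h⟩
  refine ⟨c - φ p₀, sub_pos.mpr hgap, fun p hpK hp => hnear p hpK fun hpfar => ?_⟩
  linarith [show φ p ≤ φ p₀ from hmax hpfar]

section PositiveFunctionals

variable (X : Type*) [NormedAddCommGroup X] [NormedSpace ℝ X] [Preorder X]

theorem isClosed_setOf_forall_nonneg_apply_of_nonneg :
    IsClosed {f : X →L[ℝ] ℝ | ∀ z : X, 0 ≤ z → 0 ≤ f z} := by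
  simp only [ofPred_forall]
  exact isClosed_iInter fun z => isClosed_iInter fun _ =>
    isClosed_le continuous_const ((ContinuousLinearMap.apply ℝ ℝ z).continuous)

def positiveSpherePairs : Set ((X →L[ℝ] ℝ) × X) :=
  {p | (∀ z : X, 0 ≤ z → 0 ≤ p.1 z) ∧ ‖p.1‖ = 1 ∧ ‖p.2‖ = 1}

theorem isCompact_positiveSpherePairs [FiniteDimensional ℝ X] :
    IsCompact (positiveSpherePairs X) := by
  have hsub : positiveSpherePairs X =
      ({f : X →L[ℝ] ℝ | ∀ z : X, 0 ≤ z → 0 ≤ f z} ×ˢ univ) ∩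
        (sphere (0 : X →L[ℝ] ℝ) 1 ×ˢ sphere (0 : X) 1) := by
    ext p
    simp [positiveSpherePairs]
  rw [hsub]
  exact ((isCompact_sphere 0 1).prod (isCompact_sphere 0 1)).inter_left
    ((isClosed_setOf_forall_nonneg_apply_of_nonneg X).prod isClosed_univ)

theorem apply_le_one_of_mem_positiveSpherePairs {p : (X →L[ℝ] ℝ) × X}
    (hp : p ∈ positiveSpherePairs X) : p.1 p.2 ≤ 1 := by
  obtain ⟨-, hf, hx⟩ := hp
  calc p.1 p.2 ≤ ‖p.1 p.2‖ := le_abs_self _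
    _ ≤ ‖p.1‖ * ‖p.2‖ := p.1.le_opNorm p.2
    _ = 1 := by rw [hf, hx, one_mul]

end PositiveFunctionals

theorem stmt5_general (X : Type*) [NormedAddCommGroup X] [Lattice X] [IsOrderedAddMonoid X]
    [HasSolidNorm X] [NormedSpace ℝ X]
    [FiniteDimensional ℝ X] :
    BPBppPositive X := by
  intro ε hε _
  obtain ⟨η, hη, hnear⟩ := (isCompact_positiveSpherePairs X).exists_forall_dist_lt_of_sub_lt
    isBoundedBilinearMap_apply.continuous.continuousOn
    (fun _ => apply_le_one_of_mem_positiveSpherePairs X) hε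
  refine ⟨min η (ε / 2), lt_min hη (half_pos hε), (min_le_right _ _).trans_lt (half_lt_self hε),
    fun f hf hfn x₀ hx₀ hfx₀ => ?_⟩
  obtain ⟨⟨g, y⟩, ⟨hg, hgn, hy⟩, hgy, hdist⟩ :=
    hnear (f, x₀) ⟨hf, hfn, hx₀⟩ (by linarith [min_le_left η (ε / 2)])
  rw [Prod.dist_eq, max_lt_iff, dist_comm, dist_comm x₀] at hdist
  exact ⟨y, g, hy, hg, hgn, hgy, by simpa [dist_eq_norm] using hdist.2,
    by simpa [dist_eq_norm] using hdist.1⟩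

/-- Every finite-dimensional Banach lattice has the Bishop–Phelps–Bollobás
property for positive functionals. -/
theorem stmt5 (X : Type*) [NormedAddCommGroup X] [Lattice X] [IsOrderedAddMonoid X]
    [HasSolidNorm X] [NormedSpace ℝ X]
    [PosSMulStrictMono ℝ X] [FiniteDimensional ℝ X] :
    BPBppPositive X :=
  stmt5_general X
end

section
/- Let (Ω, μ) be a measure space, 1 < p < ∞ and q the conjugate exponent with 1/p + 1/q = 1. If f ∈ L_p(μ) with ‖f‖_p = 1 and g ∈ L_q(μ) with ‖g‖_q = 1, then ‖g⁺‖_q · ‖f⁺‖_p + ‖g⁻‖_q · ‖f⁻‖_p ≤ 1. -/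
/-!
Since `f⁺` and `f⁻` have disjoint supports, `‖f⁺‖_p^p + ‖f⁻‖_p^p = ‖f‖_p^p = 1`, and likewise
`‖g⁺‖_q^q + ‖g⁻‖_q^q = 1`. Young's inequality `xy ≤ x^q/q + y^p/p`, applied to both products and
summed, bounds the left-hand side by `1/q + 1/p = 1`.
-/

open MeasureTheory
open scoped ENNReal

theorem Real.mul_add_mul_le_one_of_rpow_add_rpow_eq_one {p q a b c d : ℝ}
    (hpq : p.HolderConjugate q) (ha : 0 ≤ a) (hb : 0 ≤ b) (hc : 0 ≤ c) (hd : 0 ≤ d)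
    (hab : a ^ p + b ^ p = 1) (hcd : c ^ q + d ^ q = 1) : a * c + b * d ≤ 1 :=
  calc a * c + b * d ≤ (a ^ p / p + c ^ q / q) + (b ^ p / p + d ^ q / q) :=
        add_le_add (young_inequality_of_nonneg ha hc hpq) (young_inequality_of_nonneg hb hd hpq)
    _ = (a ^ p + b ^ p) / p + (c ^ q + d ^ q) / q := by ring
    _ = 1 := by rw [hab, hcd, hpq.one_div_add_one_div, div_one]

theorem Real.enorm_posPart_rpow_add_enorm_negPart_rpow (x : ℝ) {r : ℝ} (hr : 0 < r) :
    ‖x⁺‖ₑ ^ r + ‖x⁻‖ₑ ^ r = ‖x‖ₑ ^ r := by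
  rcases le_total 0 x with hx | hx
  · simp [posPart_eq_self.2 hx, negPart_eq_zero.2 hx, ENNReal.zero_rpow_of_pos hr]
  · simp [posPart_eq_zero.2 hx, negPart_eq_neg.2 hx, ENNReal.zero_rpow_of_pos hr]

namespace MeasureTheory

variable {α : Type*} [MeasurableSpace α] {μ : Measure α} {r : ℝ≥0∞}

theorem eLpNorm_posPart_rpow_add_eLpNorm_negPart_rpow {f : α → ℝ} (hf : AEMeasurable f μ)
    (hr0 : r ≠ 0) (hr : r ≠ ∞) :
    eLpNorm f⁺ r μ ^ r.toReal + eLpNorm f⁻ r μ ^ r.toReal = eLpNorm f r μ ^ r.toReal := by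
  have hr_pos : 0 < r.toReal := ENNReal.toReal_pos hr0 hr
  simp only [eLpNorm_eq_eLpNorm' hr0 hr, ← lintegral_rpow_enorm_eq_rpow_eLpNorm' hr_pos]
  have hf_pos : AEMeasurable (fun x ↦ ‖f⁺ x‖ₑ ^ r.toReal) μ :=
    (hf.sup_const 0).enorm.pow_const _
  rw [← lintegral_add_left' hf_pos]
  congr! 2 with x
  exact Real.enorm_posPart_rpow_add_enorm_negPart_rpow (f x) hr_pos

theorem Lp.norm_posPart_rpow_add_norm_negPart_rpow (hr0 : r ≠ 0) (hr : r ≠ ∞)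
    (f : Lp ℝ r μ) : ‖f⁺‖ ^ r.toReal + ‖f⁻‖ ^ r.toReal = ‖f‖ ^ r.toReal := by
  have hpos : eLpNorm (⇑f⁺) r μ = eLpNorm (⇑f)⁺ r μ := eLpNorm_congr_ae (by
    filter_upwards [Lp.coeFn_sup f 0, Lp.coeFn_zero ℝ r μ] with x hsup hzero
    rw [posPart_def, hsup, Pi.sup_apply, hzero]; rfl)
  have hneg : eLpNorm (⇑f⁻) r μ = eLpNorm (⇑f)⁻ r μ := eLpNorm_congr_ae (by
    filter_upwards [Lp.coeFn_sup (-f) 0, Lp.coeFn_zero ℝ r μ, Lp.coeFn_neg f] with x hsup hzero hneg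
    rw [negPart_def, hsup, Pi.sup_apply, hzero, hneg]; rfl)
  have hfin (g : Lp ℝ r μ) : eLpNorm g r μ ^ r.toReal ≠ ∞ :=
    ENNReal.rpow_ne_top_of_nonneg ENNReal.toReal_nonneg (Lp.eLpNorm_ne_top g)
  simp only [Lp.norm_def, ENNReal.toReal_rpow]
  rw [← ENNReal.toReal_add (hfin _) (hfin _), hpos, hneg,
    eLpNorm_posPart_rpow_add_eLpNorm_negPart_rpow (Lp.aestronglyMeasurable f).aemeasurable hr0 hr]

end MeasureTheory

theorem stmt9_general {Ω : Type*} [MeasurableSpace Ω] (μ : Measure Ω)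
    (p q : ℝ≥0∞)
    (hp1 : 1 < p) (hp : p ≠ ⊤) (hpq : 1 / p + 1 / q = 1)
    (f : Lp ℝ p μ) (g : Lp ℝ q μ) (hf : ‖f‖ = 1) (hg : ‖g‖ = 1) :
    ‖g ⊔ 0‖ * ‖f ⊔ 0‖ + ‖(-g) ⊔ 0‖ * ‖(-f) ⊔ 0‖ ≤ 1 := by
  have : ENNReal.HolderConjugate p q :=
    ENNReal.holderConjugate_iff.2 (by simpa only [one_div] using hpq)
  have hq : q ≠ ∞ := (ENNReal.HolderConjugate.ne_top_iff_ne_one q p).2 hp1.ne'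
  have hq0 : q ≠ 0 := ENNReal.HolderConjugate.ne_zero q p
  have hp0 : p ≠ 0 := ENNReal.HolderConjugate.ne_zero p q
  have hg_split := Lp.norm_posPart_rpow_add_norm_negPart_rpow hq0 hq g
  have hf_split := Lp.norm_posPart_rpow_add_norm_negPart_rpow hp0 hp f
  rw [hg, Real.one_rpow] at hg_split
  rw [hf, Real.one_rpow] at hf_split
  exact Real.mul_add_mul_le_one_of_rpow_add_rpow_eq_one
    (ENNReal.HolderConjugate.toReal_of_ne_top hq hp) ENNReal.toReal_nonneg ENNReal.toReal_nonneg
    ENNReal.toReal_nonneg ENNReal.toReal_nonneg hg_split hf_split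

/-- For conjugate exponents `1 < p < ∞` and `q`, if `f ∈ S_{L_p(μ)}` and
`g ∈ S_{L_q(μ)}`, then `‖g⁺‖_q·‖f⁺‖_p + ‖g⁻‖_q·‖f⁻‖_p ≤ 1`. -/
theorem stmt9 {Ω : Type*} [MeasurableSpace Ω] (μ : Measure Ω)
    (p q : ℝ≥0∞) [Fact (1 ≤ p)] [Fact (1 ≤ q)]
    (hp1 : 1 < p) (hp : p ≠ ⊤) (hpq : 1 / p + 1 / q = 1)
    (f : Lp ℝ p μ) (g : Lp ℝ q μ) (hf : ‖f‖ = 1) (hg : ‖g‖ = 1) :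
    ‖g ⊔ 0‖ * ‖f ⊔ 0‖ + ‖(-g) ⊔ 0‖ * ‖(-f) ⊔ 0‖ ≤ 1 :=
  stmt9_general μ p q hp1 hp hpq f g hf hg
end

section
/- Let K be a compact Hausdorff topological space. Then the Banach lattice C(K) of real-valued continuous functions on K, with the supremum norm and the pointwise order, is strongly monotone: for every 0 < ε < 1 there is 0 < δ < ε such that whenever f ∈ C(K) with ‖f‖ ≤ 1 and ‖f⁺‖ > 1 − δ, there exists b ∈ [0,1] with ‖f⁺/‖f⁺‖ − b·f⁻‖ = 1 and ‖b·f⁻ − f⁻‖ < ε. (In fact δ = ε and b = 1 work, since ‖f‖ = max{‖f⁺‖, ‖f⁻‖} for all f ∈ C(K).) -/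
/-- For a compact Hausdorff space `K`, the Banach lattice `C(K)` of real
continuous functions with the sup norm and pointwise order is strongly monotone. -/
theorem stmt10 (K : Type*) [TopologicalSpace K] [CompactSpace K] [T2Space K]
    (ε : ℝ) (hε0 : 0 < ε) (hε1 : ε < 1) :
    ∃ δ : ℝ, 0 < δ ∧ δ < ε ∧
      ∀ f : C(K, ℝ), ‖f‖ ≤ 1 → 1 - δ < ‖f ⊔ 0‖ →
        ∃ b : ℝ, b ∈ Set.Icc (0 : ℝ) 1 ∧
          ‖(‖f ⊔ 0‖)⁻¹ • (f ⊔ 0) - b • ((-f) ⊔ 0)‖ = 1 ∧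
          ‖b • ((-f) ⊔ 0) - ((-f) ⊔ 0)‖ < ε := by
  refine ⟨ε / 2, by positivity, by linarith, ?_⟩
  intro f hf hN
  set N : ℝ := ‖f ⊔ 0‖ with hNdef
  have hN0 : 0 < N := by nlinarith
  refine ⟨1, ⟨zero_le_one, le_refl 1⟩, ?_, by simp [hε0]⟩
  rw [one_smul]
  set g : C(K, ℝ) := N⁻¹ • (f ⊔ 0) - ((-f) ⊔ 0) with hg
  have hptf' : ∀ x : K, |f x| ≤ 1 := fun x => le_trans (f.norm_coe_le_norm x) hf
  have hfw : ∀ x : K, f x ≤ N := by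
    intro x
    have h1 : |(f ⊔ 0) x| ≤ N := (f ⊔ 0).norm_coe_le_norm x
    simp only [ContinuousMap.sup_apply, ContinuousMap.zero_apply] at h1
    calc f x ≤ f x ⊔ 0 := le_sup_left
    _ ≤ |f x ⊔ 0| := le_abs_self _
    _ ≤ N := h1
  apply le_antisymm
  · apply (ContinuousMap.norm_le _ zero_le_one).mpr
    intro x
    simp only [hg, ContinuousMap.sub_apply, ContinuousMap.smul_apply,
      ContinuousMap.sup_apply, ContinuousMap.neg_apply, ContinuousMap.zero_apply,
      smul_eq_mul, Real.norm_eq_abs]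
    rcases le_or_gt (f x) 0 with h | h
    · rw [sup_eq_right.mpr h, sup_eq_left.mpr (neg_nonneg.mpr h), mul_zero, zero_sub,
        abs_neg, abs_neg]
      exact hptf' x
    · rw [sup_eq_left.mpr h.le, sup_eq_right.mpr (by linarith : -f x ≤ 0), sub_zero,
        abs_of_nonneg (by positivity)]
      calc N⁻¹ * f x ≤ N⁻¹ * N := by gcongr; exact hfw x
      _ = 1 := inv_mul_cancel₀ hN0.ne'
  · have hsup : g ⊔ 0 = N⁻¹ • (f ⊔ 0) := by
      ext x
      simp only [hg, ContinuousMap.sup_apply, ContinuousMap.sub_apply,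
        ContinuousMap.smul_apply, ContinuousMap.neg_apply, ContinuousMap.zero_apply,
        smul_eq_mul]
      rcases le_or_gt (f x) 0 with h | h
      · rw [sup_eq_right.mpr h, sup_eq_left.mpr (neg_nonneg.mpr h), mul_zero, zero_sub,
          neg_neg]
        exact sup_eq_right.mpr h
      · rw [sup_eq_right.mpr (by linarith : -f x ≤ 0), sub_zero]
        refine sup_eq_left.mpr (mul_nonneg (by positivity) ?_)
        exact le_trans h.le le_sup_left
    have h1 : ‖g ⊔ 0‖ ≤ ‖g‖ := by
      apply (ContinuousMap.norm_le _ (norm_nonneg g)).mpr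
      intro x
      have hx := g.norm_coe_le_norm x
      simp only [ContinuousMap.sup_apply, ContinuousMap.zero_apply, Real.norm_eq_abs] at hx ⊢
      rcases le_or_gt (g x) 0 with h | h
      · simp [sup_eq_right.mpr h, norm_nonneg g]
      · rw [sup_eq_left.mpr h.le]; exact hx
    have h2 : ‖g ⊔ 0‖ = 1 := by
      have h3 : ‖N⁻¹ • (f ⊔ 0)‖ = ‖N⁻¹‖ * ‖f ⊔ 0‖ := by exact norm_smul N⁻¹ (f ⊔ 0)
      rw [hsup, h3, Real.norm_eq_abs, abs_of_pos (inv_pos.mpr hN0), ← hNdef,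
        inv_mul_cancel₀ hN0.ne']
    linarith
end

section
/- Let K be a compact Hausdorff topological space. Then C(K) has the Bishop–Phelps–Bollobás property for positive functionals: for every 0 < ε < 1 there exists 0 < η < ε such that for every positive continuous linear functional x* on C(K) with ‖x*‖ = 1 and every f₀ ∈ C(K) with ‖f₀‖ = 1 satisfying x*(f₀) > 1 − η, there exist g ∈ C(K) with ‖g‖ = 1 and a positive continuous linear functional y* with ‖y*‖ = 1 such that y*(g) = 1, ‖g − f₀‖ < ε and ‖y* − x*‖ < ε. -/
private lemma pos_mono {K : Type*} [TopologicalSpace K] [CompactSpace K]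
    (z : C(K, ℝ) →L[ℝ] ℝ) (hz : ∀ h : C(K, ℝ), 0 ≤ h → 0 ≤ z h)
    {f g : C(K, ℝ)} (h : f ≤ g) : z f ≤ z g := by
  have := hz (g - f) (sub_nonneg.2 h)
  rw [map_sub] at this; linarith

private lemma pos_abs {K : Type*} [TopologicalSpace K] [CompactSpace K]
    (z : C(K, ℝ) →L[ℝ] ℝ) (hz : ∀ h : C(K, ℝ), 0 ≤ h → 0 ≤ z h)
    {f w : C(K, ℝ)} (h1 : -w ≤ f) (h2 : f ≤ w) : |z f| ≤ z w := by
  rw [abs_le]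
  refine ⟨?_, pos_mono z hz h2⟩
  have := pos_mono z hz h1
  rw [map_neg] at this; linarith

private lemma pos_norm {K : Type*} [TopologicalSpace K] [CompactSpace K] [Nonempty K]
    (z : C(K, ℝ) →L[ℝ] ℝ) (hz : ∀ h : C(K, ℝ), 0 ≤ h → 0 ≤ z h) : ‖z‖ = z 1 := by
  have h1 : (0 : C(K, ℝ)) ≤ 1 := by
    rw [ContinuousMap.le_def]; intro t; simp
  apply le_antisymm
  · apply z.opNorm_le_bound (hz 1 h1)
    intro f
    have hft : ∀ t, |f t| ≤ ‖f‖ := fun t => by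
      rw [← Real.norm_eq_abs]; exact f.norm_coe_le_norm t
    have hb1 : -(‖f‖ • (1 : C(K, ℝ))) ≤ f := by
      rw [ContinuousMap.le_def]; intro t
      have := (abs_le.1 (hft t)).1
      simpa using this
    have hb2 : f ≤ ‖f‖ • (1 : C(K, ℝ)) := by
      rw [ContinuousMap.le_def]; intro t
      have := (abs_le.1 (hft t)).2
      simpa using this
    have := pos_abs z hz hb1 hb2
    rw [map_smul, smul_eq_mul] at this
    rw [Real.norm_eq_abs]
    calc |z f| ≤ ‖f‖ * z 1 := this
      _ = z 1 * ‖f‖ := mul_comm _ _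
  · calc z 1 ≤ ‖z 1‖ := le_abs_self _
      _ ≤ ‖z‖ * ‖(1 : C(K, ℝ))‖ := z.le_opNorm 1
      _ = ‖z‖ := by rw [norm_one, mul_one]

set_option maxHeartbeats 1000000 in
/-- For a compact Hausdorff space `K`, the Banach lattice `C(K)` has the
Bishop–Phelps–Bollobás property for positive functionals. -/
theorem stmt12 (K : Type*) [TopologicalSpace K] [CompactSpace K] [T2Space K]
    (ε : ℝ) (hε0 : 0 < ε) (hε1 : ε < 1) :
    ∃ η : ℝ, 0 < η ∧ η < ε ∧
      ∀ x' : C(K, ℝ) →L[ℝ] ℝ, (∀ h : C(K, ℝ), 0 ≤ h → 0 ≤ x' h) → ‖x'‖ = 1 →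
        ∀ f₀ : C(K, ℝ), ‖f₀‖ = 1 → 1 - η < x' f₀ →
          ∃ (g : C(K, ℝ)) (y' : C(K, ℝ) →L[ℝ] ℝ),
            ‖g‖ = 1 ∧ (∀ h : C(K, ℝ), 0 ≤ h → 0 ≤ y' h) ∧ ‖y'‖ = 1 ∧
            y' g = 1 ∧ ‖g - f₀‖ < ε ∧ ‖y' - x'‖ < ε := by
  refine ⟨ε ^ 2 / 12, by positivity, by nlinarith, ?_⟩
  intro x' hx' hxn f₀ hf₀ hxf
  have hK : Nonempty K := by
    by_contra h
    rw [not_nonempty_iff] at h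
    have hz : f₀ = 0 := by ext t; exact isEmptyElim t
    rw [hz, norm_zero] at hf₀; norm_num at hf₀
  set δ : ℝ := ε / 3 with hδdef
  set η : ℝ := ε ^ 2 / 12 with hηdef
  have hδ0 : 0 < δ := by positivity
  have hη0 : 0 < η := by positivity
  have hηδ : η < δ := by rw [hηdef, hδdef]; nlinarith
  have hx1 : x' 1 = 1 := by rw [← pos_norm x' hx', hxn]
  have hf₀t : ∀ t, |f₀ t| ≤ 1 := fun t => by
    rw [← Real.norm_eq_abs, ← hf₀]; exact f₀.norm_coe_le_norm t
  -- definitions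
  set g : C(K, ℝ) := (f₀ + ContinuousMap.const K (2 * δ)) ⊓ 1 with hgdef
  set u : C(K, ℝ) := ((δ⁻¹ • (f₀ - ContinuousMap.const K (1 - 2 * δ))) ⊓ 1) ⊔ 0 with hudef
  have hgt : ∀ t, g t = min (f₀ t + 2 * δ) 1 := fun t => rfl
  have hut : ∀ t, u t = max (min (δ⁻¹ * (f₀ t - (1 - 2 * δ))) 1) 0 := fun t => rfl
  have hu0 : (0 : C(K, ℝ)) ≤ u := by
    rw [ContinuousMap.le_def]; intro t; rw [hut]; simp [le_max_right]
  have hu1 : u ≤ 1 := by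
    rw [ContinuousMap.le_def]; intro t; rw [hut]
    exact max_le (min_le_right _ _) zero_le_one
  set c : ℝ := x' u with hcdef
  have hc1 : c ≤ 1 := by
    have := pos_mono x' hx' hu1; rwa [hx1] at this
  have hxconst : ∀ a : ℝ, x' (ContinuousMap.const K a) = a := by
    intro a
    have : ContinuousMap.const K a = a • (1 : C(K, ℝ)) := by ext t; simp
    rw [this, map_smul, smul_eq_mul, hx1, mul_one]
  have hclb : 1 - η / δ < c := by
    have hkey : δ⁻¹ • (f₀ - ContinuousMap.const K (1 - δ)) ≤ u := by
      rw [ContinuousMap.le_def]; intro t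
      rw [hut]
      have hle : (δ⁻¹ • (f₀ - ContinuousMap.const K (1 - δ))) t
          = δ⁻¹ * (f₀ t - (1 - δ)) := rfl
      rw [hle]
      have ha := hf₀t t
      rcases le_or_gt (f₀ t) (1 - δ) with h | h
      · have : δ⁻¹ * (f₀ t - (1 - δ)) ≤ 0 := by
          apply mul_nonpos_of_nonneg_of_nonpos (by positivity); linarith
        exact this.trans (le_max_right _ _)
      · have h1 : 1 ≤ δ⁻¹ * (f₀ t - (1 - 2 * δ)) := by
          rw [le_inv_mul_iff₀ hδ0]; linarith
        have h2 : δ⁻¹ * (f₀ t - (1 - δ)) ≤ 1 := by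
          rw [inv_mul_le_iff₀ hδ0]; linarith [(abs_le.1 ha).2]
        calc δ⁻¹ * (f₀ t - (1 - δ)) ≤ 1 := h2
          _ = min (δ⁻¹ * (f₀ t - (1 - 2 * δ))) 1 := (min_eq_right h1).symm
          _ ≤ max (min (δ⁻¹ * (f₀ t - (1 - 2 * δ))) 1) 0 := le_max_left _ _
    have := pos_mono x' hx' hkey
    rw [map_smul, smul_eq_mul, map_sub, hxconst] at this
    have hlt : 1 - η / δ < δ⁻¹ * (x' f₀ - (1 - δ)) := by
      rw [div_eq_inv_mul]
      have : δ - η < x' f₀ - (1 - δ) + (δ - δ) := by simp; linarith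
      have h2 : δ⁻¹ * (δ - η) < δ⁻¹ * (x' f₀ - (1 - δ)) := by
        apply mul_lt_mul_of_pos_left _ (by positivity)
        linarith
      calc 1 - δ⁻¹ * η = δ⁻¹ * (δ - η) := by field_simp
        _ < _ := h2
    linarith
  have hηδpos : η / δ < 1 := (div_lt_one hδ0).2 hηδ
  have hc0 : 0 < c := by linarith
  -- the functional y'
  set y' : C(K, ℝ) →L[ℝ] ℝ :=
    c⁻¹ • (x'.comp ((ContinuousLinearMap.mul ℝ C(K, ℝ)) u)) with hy'def
  have hy'app : ∀ f : C(K, ℝ), y' f = c⁻¹ * x' (u * f) := fun f => rfl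
  have hy'pos : ∀ h : C(K, ℝ), 0 ≤ h → 0 ≤ y' h := by
    intro h hh
    rw [hy'app]
    apply mul_nonneg (by positivity)
    apply hx'
    rw [ContinuousMap.le_def]; intro t
    have h1 := (ContinuousMap.le_def.1 hu0) t
    have h2 := (ContinuousMap.le_def.1 hh) t
    simp only [ContinuousMap.zero_apply] at h1 h2 ⊢
    simpa using mul_nonneg h1 h2
  have hy'1 : y' 1 = 1 := by
    rw [hy'app, mul_one, ← hcdef, inv_mul_cancel₀ hc0.ne']
  have hy'norm : ‖y'‖ = 1 := by rw [pos_norm y' hy'pos, hy'1]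
  -- u * g = u
  have hug : u * g = u := by
    ext t
    show u t * g t = u t
    rcases le_or_gt 1 (f₀ t + 2 * δ) with h | h
    · rw [hgt, min_eq_right h, mul_one]
    · have hu0' : u t = 0 := by
        rw [hut]
        apply max_eq_right
        refine (min_le_left _ _).trans ?_
        apply mul_nonpos_of_nonneg_of_nonpos (by positivity); linarith
      rw [hu0', zero_mul]
  have hy'g : y' g = 1 := by
    rw [hy'app, hug, ← hcdef, inv_mul_cancel₀ hc0.ne']
  -- ‖g‖ = 1
  have hgnorm : ‖g‖ = 1 := by
    have ht₀ : ∃ t, 1 - 2 * δ < f₀ t := by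
      by_contra h
      push_neg at h
      have hle : f₀ ≤ ContinuousMap.const K (1 - 2 * δ) := by
        rw [ContinuousMap.le_def]; intro t; exact h t
      have := pos_mono x' hx' hle
      rw [hxconst] at this
      have : (1 : ℝ) - η < 1 - 2 * δ := by linarith
      linarith
    obtain ⟨t₀, ht₀⟩ := ht₀
    apply le_antisymm
    · apply (ContinuousMap.norm_le g zero_le_one).2
      intro t
      rw [Real.norm_eq_abs, abs_le, hgt]
      have := abs_le.1 (hf₀t t)
      constructor
      · apply le_min <;> linarith
      · exact min_le_right _ _
    · have : g t₀ = 1 := by rw [hgt]; apply min_eq_right; linarith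
      calc (1 : ℝ) = ‖g t₀‖ := by rw [this, norm_one]
        _ ≤ ‖g‖ := g.norm_coe_le_norm t₀
  -- ‖g - f₀‖ < ε
  have hgf : ‖g - f₀‖ < ε := by
    have hle : ‖g - f₀‖ ≤ 2 * δ := by
      apply (ContinuousMap.norm_le _ (by positivity)).2
      intro t
      have hval : (g - f₀) t = min (f₀ t + 2 * δ) 1 - f₀ t := by
        simp [hgt t]
      rw [Real.norm_eq_abs, hval, abs_le]
      have := abs_le.1 (hf₀t t)
      constructor
      · have : f₀ t ≤ min (f₀ t + 2 * δ) 1 := le_min (by linarith) (by linarith)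
        linarith
      · have : min (f₀ t + 2 * δ) 1 ≤ f₀ t + 2 * δ := min_le_left _ _
        linarith
    rw [hδdef] at hle; linarith
  -- ‖y' - x'‖ < ε
  have hyx : ‖y' - x'‖ < ε := by
    have hbound : ‖y' - x'‖ ≤ 2 * (1 - c) := by
      apply ContinuousLinearMap.opNorm_le_bound _ (by linarith)
      intro f
      rw [ContinuousLinearMap.sub_apply, hy'app, Real.norm_eq_abs]
      have hft : ∀ t, |f t| ≤ ‖f‖ := fun t => by
        rw [← Real.norm_eq_abs]; exact f.norm_coe_le_norm t
      have hfn : 0 ≤ ‖f‖ := norm_nonneg f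
      have hA : |x' (u * f)| ≤ c * ‖f‖ := by
        have h1 : -(‖f‖ • u) ≤ u * f := by
          rw [ContinuousMap.le_def]; intro t
          have h2 := (ContinuousMap.le_def.1 hu0) t
          simp only [ContinuousMap.zero_apply] at h2
          simp only [ContinuousMap.neg_apply, ContinuousMap.smul_apply,
            ContinuousMap.mul_apply, smul_eq_mul]
          nlinarith [hft t, neg_abs_le (f t)]
        have h2 : u * f ≤ ‖f‖ • u := by
          rw [ContinuousMap.le_def]; intro t
          have h2 := (ContinuousMap.le_def.1 hu0) t
          simp only [ContinuousMap.zero_apply] at h2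
          simp only [ContinuousMap.smul_apply, ContinuousMap.mul_apply, smul_eq_mul]
          nlinarith [hft t, le_abs_self (f t)]
        have := pos_abs x' hx' h1 h2
        rw [map_smul, smul_eq_mul, ← hcdef] at this
        linarith [this]
      have hB : |x' (u * f - f)| ≤ (1 - c) * ‖f‖ := by
        have key : ∀ t : K, |u t * f t - f t| ≤ ‖f‖ * (1 - u t) := by
          intro t
          have h2 := (ContinuousMap.le_def.1 hu0) t
          have h3 := (ContinuousMap.le_def.1 hu1) t
          simp only [ContinuousMap.zero_apply, ContinuousMap.one_apply] at h2 h3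
          have : |u t * f t - f t| = (1 - u t) * |f t| := by
            rw [show u t * f t - f t = -((1 - u t) * f t) by ring, abs_neg,
              abs_mul, abs_of_nonneg (by linarith)]
          rw [this]
          nlinarith [hft t, abs_nonneg (f t)]
        have h1 : -(‖f‖ • ((1 : C(K, ℝ)) - u)) ≤ u * f - f := by
          rw [ContinuousMap.le_def]; intro t
          have := (abs_le.1 (key t)).1
          simp only [ContinuousMap.neg_apply, ContinuousMap.smul_apply,
            ContinuousMap.mul_apply, ContinuousMap.sub_apply, ContinuousMap.one_apply,
            smul_eq_mul]
          linarith
        have h2 : u * f - f ≤ ‖f‖ • ((1 : C(K, ℝ)) - u) := by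
          rw [ContinuousMap.le_def]; intro t
          have := (abs_le.1 (key t)).2
          simp only [ContinuousMap.smul_apply, ContinuousMap.mul_apply,
            ContinuousMap.sub_apply, ContinuousMap.one_apply, smul_eq_mul]
          linarith
        have := pos_abs x' hx' h1 h2
        rw [map_smul, smul_eq_mul] at this
        simp only [map_sub] at this
        rw [hx1, ← hcdef] at this
        rw [map_sub]
        linarith [this]
      have hsplit : c⁻¹ * x' (u * f) - x' f
          = (c⁻¹ - 1) * x' (u * f) + x' (u * f - f) := by
        rw [map_sub]; ring
      rw [hsplit]
      have hcinv : 1 ≤ c⁻¹ := (one_le_inv_iff₀.2 ⟨hc0, hc1⟩)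
      calc |(c⁻¹ - 1) * x' (u * f) + x' (u * f - f)|
          ≤ |(c⁻¹ - 1) * x' (u * f)| + |x' (u * f - f)| := abs_add_le _ _
        _ = (c⁻¹ - 1) * |x' (u * f)| + |x' (u * f - f)| := by
            rw [abs_mul, abs_of_nonneg (by linarith)]
        _ ≤ (c⁻¹ - 1) * (c * ‖f‖) + (1 - c) * ‖f‖ := by
            have := mul_le_mul_of_nonneg_left hA (by linarith : (0:ℝ) ≤ c⁻¹ - 1)
            linarith
        _ = (1 - c) * ‖f‖ + (1 - c) * ‖f‖ := by
            rw [show (c⁻¹ - 1) * (c * ‖f‖) = (c⁻¹ * c - c) * ‖f‖ by ring,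
              inv_mul_cancel₀ hc0.ne']
        _ = 2 * (1 - c) * ‖f‖ := by ring
    have h2 : 2 * (1 - c) < 2 * (η / δ) := by linarith
    have h3 : 2 * (η / δ) = ε / 2 := by
      rw [hηdef, hδdef]; field_simp; ring
    linarith
  exact ⟨g, y', hgnorm, hy'pos, hy'norm, hy'g, hgf, hyx⟩
end

section
/- Let ‖·‖ be an absolute norm on ℝ², and let ‖·‖_* denote its dual norm, ‖(u,v)‖_* = sup{u·a + v·b : ‖(a,b)‖ ≤ 1}. If x = (a,b) ∈ ℝ² with ‖x‖ = 1 and x* = (u,v) ∈ ℝ² with ‖x*‖_* = 1 satisfy u·a + v·b = 1, then ‖x*⁺‖_* · ‖x⁺‖ + ‖x*⁻‖_* · ‖x⁻‖ ≤ 1, where for a vector w = (w₁,w₂) ∈ ℝ² we set w⁺ = (max{w₁,0}, max{w₂,0}) and w⁻ = (max{−w₁,0}, max{−w₂,0}). Consequently ℝ² with an absolute norm and the coordinatewise order has the hereditary norm attaining property. -/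
/-- The dual norm of a norm `N` on `ℝ²`: `‖(u,v)‖_* = sup { u·a + v·b : N (a,b) ≤ 1 }`. -/
noncomputable def dualNorm2 (N : ℝ × ℝ → ℝ) (w : ℝ × ℝ) : ℝ :=
  sSup ((fun x : ℝ × ℝ => w.1 * x.1 + w.2 * x.2) '' {x : ℝ × ℝ | N x ≤ 1})

private lemma absmax (u : ℝ) : |max u 0| ≤ |u| := by
  rw [abs_of_nonneg (le_max_right u 0)]
  exact max_le (le_abs_self u) (abs_nonneg u)

private lemma absmaxneg (u : ℝ) : |max (-u) 0| ≤ |u| := by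
  have h := absmax (-u)
  rwa [abs_neg] at h

private lemma nzero {N : ℝ × ℝ → ℝ}
    (hsmul : ∀ (c : ℝ) (x : ℝ × ℝ), N (c • x) = |c| * N x) : N 0 = 0 := by
  simpa using hsmul 0 0

private lemma nneg {N : ℝ × ℝ → ℝ}
    (htri : ∀ x y : ℝ × ℝ, N (x + y) ≤ N x + N y)
    (hsmul : ∀ (c : ℝ) (x : ℝ × ℝ), N (c • x) = |c| * N x)
    (x : ℝ × ℝ) : 0 ≤ N x := by
  have h0 := nzero hsmul
  have h1 : N (-x) = N x := by simpa using hsmul (-1) x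
  have h2 := htri x (-x)
  rw [add_neg_cancel, h0, h1] at h2
  linarith

private lemma mono1 {N : ℝ × ℝ → ℝ}
    (htri : ∀ x y : ℝ × ℝ, N (x + y) ≤ N x + N y)
    (hsmul : ∀ (c : ℝ) (x : ℝ × ℝ), N (c • x) = |c| * N x)
    (habs : ∀ a b : ℝ, N (a, b) = N (|a|, |b|))
    {x x' y : ℝ} (hx : 0 ≤ x) (hxx : x ≤ x') : N (x, y) ≤ N (x', y) := by
  rcases eq_or_lt_of_le (hx.trans hxx) with h0 | h0
  · have hx0 : x = 0 := le_antisymm (by rw [h0]; exact hxx) hx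
    rw [hx0, ← h0]
  · have hne : x' ≠ 0 := ne_of_gt h0
    have ht : 0 ≤ (x' + x) / (2 * x') := div_nonneg (by linarith) (by linarith)
    have hs : 0 ≤ (x' - x) / (2 * x') := div_nonneg (by linarith) (by linarith)
    have hts : (x' + x) / (2 * x') + (x' - x) / (2 * x') = 1 := by
      field_simp
      ring
    have hkey : (x, y) = ((x' + x) / (2 * x')) • ((x' : ℝ), y)
        + ((x' - x) / (2 * x')) • ((-x' : ℝ), y) := by
      simp only [Prod.smul_mk, smul_eq_mul, Prod.mk_add_mk, Prod.mk.injEq]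
      constructor
      · field_simp
        ring
      · rw [← add_mul, hts, one_mul]
    calc N (x, y) = N (((x' + x) / (2 * x')) • ((x' : ℝ), y)
            + ((x' - x) / (2 * x')) • ((-x' : ℝ), y)) := by rw [← hkey]
      _ ≤ N (((x' + x) / (2 * x')) • ((x' : ℝ), y))
            + N (((x' - x) / (2 * x')) • ((-x' : ℝ), y)) := htri _ _
      _ = ((x' + x) / (2 * x')) * N (x', y) + ((x' - x) / (2 * x')) * N (-x', y) := by
            rw [hsmul, hsmul, abs_of_nonneg ht, abs_of_nonneg hs]
      _ = ((x' + x) / (2 * x')) * N (x', y) + ((x' - x) / (2 * x')) * N (x', y) := by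
            rw [habs (-x') y, abs_neg, ← habs x' y]
      _ = N (x', y) := by rw [← add_mul, hts, one_mul]

private lemma mono2 {N : ℝ × ℝ → ℝ}
    (htri : ∀ x y : ℝ × ℝ, N (x + y) ≤ N x + N y)
    (hsmul : ∀ (c : ℝ) (x : ℝ × ℝ), N (c • x) = |c| * N x)
    (habs : ∀ a b : ℝ, N (a, b) = N (|a|, |b|))
    {x y y' : ℝ} (hy : 0 ≤ y) (hyy : y ≤ y') : N (x, y) ≤ N (x, y') := by
  rcases eq_or_lt_of_le (hy.trans hyy) with h0 | h0
  · have hy0 : y = 0 := le_antisymm (by rw [h0]; exact hyy) hy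
    rw [hy0, ← h0]
  · have hne : y' ≠ 0 := ne_of_gt h0
    have ht : 0 ≤ (y' + y) / (2 * y') := div_nonneg (by linarith) (by linarith)
    have hs : 0 ≤ (y' - y) / (2 * y') := div_nonneg (by linarith) (by linarith)
    have hts : (y' + y) / (2 * y') + (y' - y) / (2 * y') = 1 := by
      field_simp
      ring
    have hkey : (x, y) = ((y' + y) / (2 * y')) • (x, (y' : ℝ))
        + ((y' - y) / (2 * y')) • (x, (-y' : ℝ)) := by
      simp only [Prod.smul_mk, smul_eq_mul, Prod.mk_add_mk, Prod.mk.injEq]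
      constructor
      · rw [← add_mul, hts, one_mul]
      · field_simp
        ring
    calc N (x, y) = N (((y' + y) / (2 * y')) • (x, (y' : ℝ))
            + ((y' - y) / (2 * y')) • (x, (-y' : ℝ))) := by rw [← hkey]
      _ ≤ N (((y' + y) / (2 * y')) • (x, (y' : ℝ)))
            + N (((y' - y) / (2 * y')) • (x, (-y' : ℝ))) := htri _ _
      _ = ((y' + y) / (2 * y')) * N (x, y') + ((y' - y) / (2 * y')) * N (x, -y') := by
            rw [hsmul, hsmul, abs_of_nonneg ht, abs_of_nonneg hs]
      _ = ((y' + y) / (2 * y')) * N (x, y') + ((y' - y) / (2 * y')) * N (x, y') := by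
            rw [habs x (-y'), abs_neg, ← habs x y']
      _ = N (x, y') := by rw [← add_mul, hts, one_mul]

private lemma e1pos {N : ℝ × ℝ → ℝ}
    (htri : ∀ x y : ℝ × ℝ, N (x + y) ≤ N x + N y)
    (hsmul : ∀ (c : ℝ) (x : ℝ × ℝ), N (c • x) = |c| * N x)
    (hdef : ∀ x : ℝ × ℝ, N x = 0 → x = 0) : 0 < N (1, 0) := by
  rcases (nneg htri hsmul (1, 0)).lt_or_eq with h | h
  · exact h
  · exfalso
    have h2 := hdef (1, 0) h.symm
    simp [Prod.ext_iff] at h2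

private lemma e2pos {N : ℝ × ℝ → ℝ}
    (htri : ∀ x y : ℝ × ℝ, N (x + y) ≤ N x + N y)
    (hsmul : ∀ (c : ℝ) (x : ℝ × ℝ), N (c • x) = |c| * N x)
    (hdef : ∀ x : ℝ × ℝ, N x = 0 → x = 0) : 0 < N (0, 1) := by
  rcases (nneg htri hsmul (0, 1)).lt_or_eq with h | h
  · exact h
  · exfalso
    have h2 := hdef (0, 1) h.symm
    simp [Prod.ext_iff] at h2

private lemma coord1 {N : ℝ × ℝ → ℝ}
    (htri : ∀ x y : ℝ × ℝ, N (x + y) ≤ N x + N y)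
    (hsmul : ∀ (c : ℝ) (x : ℝ × ℝ), N (c • x) = |c| * N x)
    (habs : ∀ a b : ℝ, N (a, b) = N (|a|, |b|))
    {x : ℝ × ℝ} (hx : N x ≤ 1) : |x.1| * N (1, 0) ≤ 1 := by
  have h1 : N (|x.1|, 0) = |x.1| * N (1, 0) := by
    have h := hsmul |x.1| (1, 0)
    rw [Prod.smul_mk, smul_eq_mul, smul_eq_mul, mul_one, mul_zero, abs_abs] at h
    exact h
  calc |x.1| * N (1, 0) = N (|x.1|, 0) := h1.symm
    _ ≤ N (|x.1|, |x.2|) := mono2 htri hsmul habs le_rfl (abs_nonneg _)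
    _ = N x := by rw [← habs x.1 x.2]
    _ ≤ 1 := hx

private lemma coord2 {N : ℝ × ℝ → ℝ}
    (htri : ∀ x y : ℝ × ℝ, N (x + y) ≤ N x + N y)
    (hsmul : ∀ (c : ℝ) (x : ℝ × ℝ), N (c • x) = |c| * N x)
    (habs : ∀ a b : ℝ, N (a, b) = N (|a|, |b|))
    {x : ℝ × ℝ} (hx : N x ≤ 1) : |x.2| * N (0, 1) ≤ 1 := by
  have h1 : N (0, |x.2|) = |x.2| * N (0, 1) := by
    have h := hsmul |x.2| (0, 1)
    rw [Prod.smul_mk, smul_eq_mul, smul_eq_mul, mul_one, mul_zero, abs_abs] at h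
    exact h
  calc |x.2| * N (0, 1) = N (0, |x.2|) := h1.symm
    _ ≤ N (|x.1|, |x.2|) := mono1 htri hsmul habs le_rfl (abs_nonneg _)
    _ = N x := by rw [← habs x.1 x.2]
    _ ≤ 1 := hx

private lemma dbdd {N : ℝ × ℝ → ℝ}
    (htri : ∀ x y : ℝ × ℝ, N (x + y) ≤ N x + N y)
    (hsmul : ∀ (c : ℝ) (x : ℝ × ℝ), N (c • x) = |c| * N x)
    (hdef : ∀ x : ℝ × ℝ, N x = 0 → x = 0)
    (habs : ∀ a b : ℝ, N (a, b) = N (|a|, |b|))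
    (w : ℝ × ℝ) :
    BddAbove ((fun x : ℝ × ℝ => w.1 * x.1 + w.2 * x.2) '' {x : ℝ × ℝ | N x ≤ 1}) := by
  have h1 := e1pos htri hsmul hdef
  have h2 := e2pos htri hsmul hdef
  refine ⟨|w.1| / N (1, 0) + |w.2| / N (0, 1), ?_⟩
  rintro r ⟨x, hx, rfl⟩
  have b1 : |x.1| ≤ 1 / N (1, 0) := (le_div_iff₀ h1).2 (coord1 htri hsmul habs hx)
  have b2 : |x.2| ≤ 1 / N (0, 1) := (le_div_iff₀ h2).2 (coord2 htri hsmul habs hx)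
  calc w.1 * x.1 + w.2 * x.2 ≤ |w.1| * |x.1| + |w.2| * |x.2| := by
        refine add_le_add ?_ ?_ <;> (rw [← abs_mul]; exact le_abs_self _)
    _ ≤ |w.1| * (1 / N (1, 0)) + |w.2| * (1 / N (0, 1)) :=
        add_le_add (mul_le_mul_of_nonneg_left b1 (abs_nonneg _))
          (mul_le_mul_of_nonneg_left b2 (abs_nonneg _))
    _ = |w.1| / N (1, 0) + |w.2| / N (0, 1) := by ring

private lemma ledual {N : ℝ × ℝ → ℝ}
    (htri : ∀ x y : ℝ × ℝ, N (x + y) ≤ N x + N y)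
    (hsmul : ∀ (c : ℝ) (x : ℝ × ℝ), N (c • x) = |c| * N x)
    (hdef : ∀ x : ℝ × ℝ, N x = 0 → x = 0)
    (habs : ∀ a b : ℝ, N (a, b) = N (|a|, |b|))
    (w x : ℝ × ℝ) (hx : N x ≤ 1) : w.1 * x.1 + w.2 * x.2 ≤ dualNorm2 N w :=
  le_csSup (dbdd htri hsmul hdef habs w) ⟨x, hx, rfl⟩

private lemma dle {N : ℝ × ℝ → ℝ}
    (hsmul : ∀ (c : ℝ) (x : ℝ × ℝ), N (c • x) = |c| * N x)
    (w : ℝ × ℝ) {c : ℝ}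
    (h : ∀ x : ℝ × ℝ, N x ≤ 1 → w.1 * x.1 + w.2 * x.2 ≤ c) : dualNorm2 N w ≤ c := by
  apply csSup_le
  · exact ⟨w.1 * 0 + w.2 * 0, ⟨0, by simp [Set.mem_setOf_eq, nzero hsmul], rfl⟩⟩
  · rintro r ⟨x, hx, rfl⟩
    exact h x hx

private lemma dnonneg {N : ℝ × ℝ → ℝ}
    (htri : ∀ x y : ℝ × ℝ, N (x + y) ≤ N x + N y)
    (hsmul : ∀ (c : ℝ) (x : ℝ × ℝ), N (c • x) = |c| * N x)
    (hdef : ∀ x : ℝ × ℝ, N x = 0 → x = 0)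
    (habs : ∀ a b : ℝ, N (a, b) = N (|a|, |b|))
    (w : ℝ × ℝ) : 0 ≤ dualNorm2 N w := by
  have h := ledual htri hsmul hdef habs w 0 (by rw [nzero hsmul]; norm_num)
  simpa using h

private lemma dmono {N : ℝ × ℝ → ℝ}
    (htri : ∀ x y : ℝ × ℝ, N (x + y) ≤ N x + N y)
    (hsmul : ∀ (c : ℝ) (x : ℝ × ℝ), N (c • x) = |c| * N x)
    (hdef : ∀ x : ℝ × ℝ, N x = 0 → x = 0)
    (habs : ∀ a b : ℝ, N (a, b) = N (|a|, |b|))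
    {u v u' v' : ℝ} (h1 : |u| ≤ |u'|) (h2 : |v| ≤ |v'|) :
    dualNorm2 N (u, v) ≤ dualNorm2 N (u', v') := by
  apply dle hsmul
  intro x hx
  set y1 := if 0 ≤ u' then |x.1| else -|x.1| with hy1
  set y2 := if 0 ≤ v' then |x.2| else -|x.2| with hy2
  have ha1 : |y1| = |x.1| := by rw [hy1]; split_ifs <;> simp
  have ha2 : |y2| = |x.2| := by rw [hy2]; split_ifs <;> simp
  have hN : N (y1, y2) ≤ 1 := by
    rw [habs y1 y2, ha1, ha2, ← habs x.1 x.2]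
    exact hx
  have e1 : u' * y1 = |u'| * |x.1| := by
    rw [hy1]; split_ifs with h
    · rw [abs_of_nonneg h]
    · rw [abs_of_neg (not_le.1 h)]; ring
  have e2 : v' * y2 = |v'| * |x.2| := by
    rw [hy2]; split_ifs with h
    · rw [abs_of_nonneg h]
    · rw [abs_of_neg (not_le.1 h)]; ring
  have hle := ledual htri hsmul hdef habs (u', v') (y1, y2) hN
  calc (u, v).1 * x.1 + (u, v).2 * x.2 = u * x.1 + v * x.2 := rfl
    _ ≤ |u| * |x.1| + |v| * |x.2| := by
        refine add_le_add ?_ ?_ <;> (rw [← abs_mul]; exact le_abs_self _)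
    _ ≤ |u'| * |x.1| + |v'| * |x.2| :=
        add_le_add (mul_le_mul_of_nonneg_right h1 (abs_nonneg _))
          (mul_le_mul_of_nonneg_right h2 (abs_nonneg _))
    _ = u' * y1 + v' * y2 := by rw [e1, e2]
    _ ≤ dualNorm2 N (u', v') := hle

private lemma de1 {N : ℝ × ℝ → ℝ}
    (htri : ∀ x y : ℝ × ℝ, N (x + y) ≤ N x + N y)
    (hsmul : ∀ (c : ℝ) (x : ℝ × ℝ), N (c • x) = |c| * N x)
    (hdef : ∀ x : ℝ × ℝ, N x = 0 → x = 0)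
    (habs : ∀ a b : ℝ, N (a, b) = N (|a|, |b|))
    {u : ℝ} (hu : 0 ≤ u) : dualNorm2 N (u, 0) = u / N (1, 0) := by
  have h1 := e1pos htri hsmul hdef
  apply le_antisymm
  · apply dle hsmul
    intro x hx
    have b1 : x.1 ≤ 1 / N (1, 0) :=
      le_trans (le_abs_self _) ((le_div_iff₀ h1).2 (coord1 htri hsmul habs hx))
    calc (u, (0 : ℝ)).1 * x.1 + (u, (0 : ℝ)).2 * x.2 = u * x.1 := by
          simp
      _ ≤ u * (1 / N (1, 0)) := mul_le_mul_of_nonneg_left b1 hu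
      _ = u / N (1, 0) := by ring
  · have hmem : N ((1 / N (1, 0) : ℝ), (0 : ℝ)) ≤ 1 := by
      have h := hsmul (1 / N (1, 0)) (1, 0)
      rw [Prod.smul_mk, smul_eq_mul, smul_eq_mul, mul_one, mul_zero] at h
      rw [h, abs_of_nonneg (le_of_lt (by positivity))]
      exact le_of_eq (one_div_mul_cancel h1.ne')
    have hle := ledual htri hsmul hdef habs (u, 0) (1 / N (1, 0), 0) hmem
    calc u / N (1, 0) = u * (1 / N (1, 0)) + 0 * 0 := by ring
      _ ≤ dualNorm2 N (u, 0) := hle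

private lemma de2 {N : ℝ × ℝ → ℝ}
    (htri : ∀ x y : ℝ × ℝ, N (x + y) ≤ N x + N y)
    (hsmul : ∀ (c : ℝ) (x : ℝ × ℝ), N (c • x) = |c| * N x)
    (hdef : ∀ x : ℝ × ℝ, N x = 0 → x = 0)
    (habs : ∀ a b : ℝ, N (a, b) = N (|a|, |b|))
    {v : ℝ} (hv : 0 ≤ v) : dualNorm2 N (0, v) = v / N (0, 1) := by
  have h2 := e2pos htri hsmul hdef
  apply le_antisymm
  · apply dle hsmul
    intro x hx
    have b2 : x.2 ≤ 1 / N (0, 1) :=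
      le_trans (le_abs_self _) ((le_div_iff₀ h2).2 (coord2 htri hsmul habs hx))
    calc ((0 : ℝ), v).1 * x.1 + ((0 : ℝ), v).2 * x.2 = v * x.2 := by
          simp
      _ ≤ v * (1 / N (0, 1)) := mul_le_mul_of_nonneg_left b2 hv
      _ = v / N (0, 1) := by ring
  · have hmem : N ((0 : ℝ), (1 / N (0, 1) : ℝ)) ≤ 1 := by
      have h := hsmul (1 / N (0, 1)) (0, 1)
      rw [Prod.smul_mk, smul_eq_mul, smul_eq_mul, mul_one, mul_zero] at h
      rw [h, abs_of_nonneg (le_of_lt (by positivity))]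
      exact le_of_eq (one_div_mul_cancel h2.ne')
    have hle := ledual htri hsmul hdef habs (0, v) (0, 1 / N (0, 1)) hmem
    calc v / N (0, 1) = 0 * 0 + v * (1 / N (0, 1)) := by ring
      _ ≤ dualNorm2 N (0, v) := hle

/-- If `N` is an absolute norm on `ℝ²`, `x = (a,b)` has `N x = 1`,
`x* = (u,v)` has dual norm `1` and `x*(x) = 1`, then
`‖x*⁺‖_*·‖x⁺‖ + ‖x*⁻‖_*·‖x⁻‖ ≤ 1`, where positive and negative parts are coordinatewise.
(Hence `ℝ²` with an absolute norm has the hereditary norm attaining property.) -/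
theorem stmt13 (N : ℝ × ℝ → ℝ)
    (htri : ∀ x y : ℝ × ℝ, N (x + y) ≤ N x + N y)
    (hsmul : ∀ (c : ℝ) (x : ℝ × ℝ), N (c • x) = |c| * N x)
    (hdef : ∀ x : ℝ × ℝ, N x = 0 → x = 0)
    (habs : ∀ a b : ℝ, N (a, b) = N (|a|, |b|))
    (a b u v : ℝ) (hx : N (a, b) = 1) (hxs : dualNorm2 N (u, v) = 1)
    (hatt : u * a + v * b = 1) :
    dualNorm2 N (max u 0, max v 0) * N (max a 0, max b 0) +
      dualNorm2 N (max (-u) 0, max (-v) 0) * N (max (-a) 0, max (-b) 0) ≤ 1 := by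
  have hT : N ((0 : ℝ), (0 : ℝ)) = 0 := nzero hsmul
  have h1 := e1pos htri hsmul hdef
  have h2 := e2pos htri hsmul hdef
  -- sign alignment
  have habs_le : dualNorm2 N (|u|, |v|) ≤ 1 := by
    rw [← hxs]
    exact dmono htri hsmul hdef habs (by rw [abs_abs]) (by rw [abs_abs])
  have hkey : |u| * |a| + |v| * |b| ≤ 1 := by
    have hmem : N ((|a| : ℝ), (|b| : ℝ)) ≤ 1 := by rw [← habs a b, hx]
    have hle := ledual htri hsmul hdef habs (|u|, |v|) (|a|, |b|) hmem
    exact le_trans hle habs_le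
  have hua : u * a = |u| * |a| := by
    have e1 : u * a ≤ |u| * |a| := by rw [← abs_mul]; exact le_abs_self _
    have e2 : v * b ≤ |v| * |b| := by rw [← abs_mul]; exact le_abs_self _
    linarith
  have hvb : v * b = |v| * |b| := by
    have e1 : u * a ≤ |u| * |a| := by rw [← abs_mul]; exact le_abs_self _
    have e2 : v * b ≤ |v| * |b| := by rw [← abs_mul]; exact le_abs_self _
    linarith
  rcases le_or_gt 0 a with ha | ha
  · rcases le_or_gt 0 b with hb | hb
    · -- 0 ≤ a, 0 ≤ b
      rw [max_eq_left ha, max_eq_left hb, max_eq_right (neg_nonpos.2 ha),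
          max_eq_right (neg_nonpos.2 hb), hx, hT, mul_zero, add_zero, mul_one, ← hxs]
      exact dmono htri hsmul hdef habs (absmax u) (absmax v)
    · -- 0 ≤ a, b < 0
      rcases ha.lt_or_eq with ha0 | ha0
      · -- 0 < a, b < 0
        have h := hua
        rw [abs_of_pos ha0] at h
        have hu' : u = |u| := mul_right_cancel₀ ha0.ne' h
        have hu0 : 0 ≤ u := by have := abs_nonneg u; linarith
        have hh := hvb
        rw [abs_of_neg hb] at hh
        have hv' : v = -|v| := mul_right_cancel₀ hb.ne (by rw [hh]; ring)
        have hv0 : v ≤ 0 := by have := abs_nonneg v; linarith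
        rw [max_eq_left hu0, max_eq_right hv0, max_eq_right (neg_nonpos.2 hu0),
            max_eq_left (neg_nonneg.2 hv0), max_eq_left ha0.le, max_eq_right hb.le,
            max_eq_right (neg_nonpos.2 ha0.le), max_eq_left (neg_nonneg.2 hb.le)]
        rw [de1 htri hsmul hdef habs hu0, de2 htri hsmul hdef habs (neg_nonneg.2 hv0)]
        have hNa : N (a, (0 : ℝ)) = a * N (1, 0) := by
          have hh2 := hsmul a (1, 0)
          rw [Prod.smul_mk, smul_eq_mul, smul_eq_mul, mul_one, mul_zero,
            abs_of_pos ha0] at hh2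
          exact hh2
        have hNb : N ((0 : ℝ), -b) = -b * N (0, 1) := by
          have hh2 := hsmul (-b) (0, 1)
          rw [Prod.smul_mk, smul_eq_mul, smul_eq_mul, mul_one, mul_zero,
            abs_of_pos (by linarith : (0:ℝ) < -b)] at hh2
          exact hh2
        rw [hNa, hNb]
        have q1 : u / N (1, 0) * (a * N (1, 0)) = u * a := by
          field_simp
        have q2 : -v / N (0, 1) * (-b * N (0, 1)) = v * b := by
          field_simp
        rw [q1, q2, hatt]
      · -- a = 0, b < 0
        subst ha0
        simp only [neg_zero, max_self]
        rw [max_eq_right hb.le, max_eq_left (neg_nonneg.2 hb.le), hT, mul_zero, zero_add]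
        have hd : dualNorm2 N (max (-u) 0, max (-v) 0) ≤ 1 := by
          rw [← hxs]
          exact dmono htri hsmul hdef habs (absmaxneg u) (absmaxneg v)
        have hNb : N ((0 : ℝ), -b) = 1 := by
          have e1 := habs 0 (-b)
          have e2 := habs 0 b
          simp only [abs_neg, abs_zero] at e1 e2
          rw [e1, ← e2]
          exact hx
        rw [hNb, mul_one]
        exact hd
  · rcases le_or_gt b 0 with hb | hb
    · -- a < 0, b ≤ 0
      rw [max_eq_right ha.le, max_eq_right hb, hT, mul_zero, zero_add,
          max_eq_left (neg_nonneg.2 ha.le), max_eq_left (neg_nonneg.2 hb)]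
      have hd : dualNorm2 N (max (-u) 0, max (-v) 0) ≤ 1 := by
        rw [← hxs]
        exact dmono htri hsmul hdef habs (absmaxneg u) (absmaxneg v)
      have hNb : N (-a, -b) = 1 := by
        have e1 := habs (-a) (-b)
        simp only [abs_neg] at e1
        rw [e1, ← habs a b]
        exact hx
      rw [hNb, mul_one]
      exact hd
    · -- a < 0, 0 < b
      have h := hua
      rw [abs_of_neg ha] at h
      have hu' : u = -|u| := mul_right_cancel₀ ha.ne (by rw [h]; ring)
      have hu0 : u ≤ 0 := by have := abs_nonneg u; linarith
      have hh := hvb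
      rw [abs_of_pos hb] at hh
      have hv' : v = |v| := mul_right_cancel₀ hb.ne' hh
      have hv0 : 0 ≤ v := by have := abs_nonneg v; linarith
      rw [max_eq_right hu0, max_eq_left hv0, max_eq_left (neg_nonneg.2 hu0),
          max_eq_right (neg_nonpos.2 hv0), max_eq_right ha.le, max_eq_left hb.le,
          max_eq_left (neg_nonneg.2 ha.le), max_eq_right (neg_nonpos.2 hb.le)]
      rw [de2 htri hsmul hdef habs hv0, de1 htri hsmul hdef habs (neg_nonneg.2 hu0)]
      have hNa : N (-a, (0 : ℝ)) = -a * N (1, 0) := by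
        have hh2 := hsmul (-a) (1, 0)
        rw [Prod.smul_mk, smul_eq_mul, smul_eq_mul, mul_one, mul_zero,
          abs_of_pos (by linarith : (0:ℝ) < -a)] at hh2
        exact hh2
      have hNb : N ((0 : ℝ), b) = b * N (0, 1) := by
        have hh2 := hsmul b (0, 1)
        rw [Prod.smul_mk, smul_eq_mul, smul_eq_mul, mul_one, mul_zero,
          abs_of_pos hb] at hh2
        exact hh2
      rw [hNa, hNb]
      have q1 : v / N (0, 1) * (b * N (0, 1)) = v * b := by
        field_simp
      have q2 : -u / N (1, 0) * (-a * N (1, 0)) = u * a := by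
        field_simp
      rw [q1, q2]
      linarith
end

section
/- Let ‖·‖ be an absolute norm on ℝ². Then ℝ² with this norm and the coordinatewise order is strongly monotone: for every 0 < ε < 1 there is 0 < δ < ε such that whenever x ∈ ℝ² with ‖x‖ ≤ 1 and ‖x⁺‖ > 1 − δ, there exists b ∈ [0,1] with ‖x⁺/‖x⁺‖ − b·x⁻‖ = 1 and ‖b·x⁻ − x⁻‖ < ε. -/
/-!
Write `u = (p (1, 0))⁻¹`. For `x = (a, -s)` with `a > 0` and `s ≥ 0` the normalized positive part
is always `(u, 0)`, and since absolute norms are monotone in each coordinate the `y ≥ 0` with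
`p (u, y) = 1` form an interval `[0, Y]`. Taking `b * s = min s Y` meets the first condition, and
the second reduces to `s < t := Y + ε / p (0, 1)`. If that failed, the triangle inequality for
`(u, t) = (a, t) + (u - a, 0)` together with `p x ≤ 1` would give `p x⁺ ≤ 2 - p (u, t)`, which
`δ := p (u, t) - 1 > 0` rules out. The other mixed-sign case follows by swapping the
coordinates; for `x ≥ 0` take `b = 1`, and `x ≤ 0` is impossible since then `x⁺ = 0`.
-/

open Set

namespace Seminorm

variable {p : Seminorm ℝ (ℝ × ℝ)}

def IsAbsolute (p : Seminorm ℝ (ℝ × ℝ)) : Prop :=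
  ∀ a b : ℝ, p (a, b) = p (|a|, |b|)

lemma apply_mk_zero (p : Seminorm ℝ (ℝ × ℝ)) (c : ℝ) : p (c, 0) = |c| * p (1, 0) := by
  simpa using map_smul_eq_mul p c ((1 : ℝ), (0 : ℝ))

lemma apply_zero_mk (p : Seminorm ℝ (ℝ × ℝ)) (c : ℝ) : p (0, c) = |c| * p (0, 1) := by
  simpa using map_smul_eq_mul p c ((0 : ℝ), (1 : ℝ))

lemma continuous_apply_mk (p : Seminorm ℝ (ℝ × ℝ)) (a : ℝ) :
    Continuous fun y : ℝ => p (a, y) := by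
  refine (LipschitzWith.of_dist_le' (K := p (0, 1)) fun y y' => ?_).continuous
  calc dist (p (a, y)) (p (a, y')) ≤ p ((a, y) - (a, y')) := abs_sub_map_le_sub p _ _
    _ = p (0, 1) * dist y y' := by
      rw [Prod.mk_sub_mk, sub_self, apply_zero_mk, Real.dist_eq, mul_comm]

def StronglyMonotoneAt (p : Seminorm ℝ (ℝ × ℝ)) (ε : ℝ) (x : ℝ × ℝ) : Prop :=
  ∃ b ∈ Icc (0 : ℝ) 1, p ((p x⁺)⁻¹ • x⁺ - b • x⁻) = 1 ∧ p (b • x⁻ - x⁻) < ε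

lemma StronglyMonotoneAt.of_swap {ε : ℝ} {x : ℝ × ℝ}
    (h : (p.comp (LinearEquiv.prodComm ℝ ℝ ℝ).toLinearMap).StronglyMonotoneAt ε x.swap) :
    p.StronglyMonotoneAt ε x :=
  -- `Prod.swap` commutes with `⁺`, `⁻`, `•` and `-` definitionally
  h

lemma stronglyMonotoneAt_of_nonneg {ε : ℝ} (hε : 0 < ε) {x : ℝ × ℝ} (hx : 0 ≤ x)
    (hpx : p x ≠ 0) : p.StronglyMonotoneAt ε x := by
  refine ⟨1, ⟨zero_le_one, le_rfl⟩, ?_, ?_⟩ <;> rw [negPart_of_nonneg hx, smul_zero, sub_zero]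
  · rw [posPart_of_nonneg hx, map_smul_eq_mul,
      Real.norm_of_nonneg (inv_nonneg.2 (apply_nonneg p x)), inv_mul_cancel₀ hpx]
  · rwa [map_zero]

namespace IsAbsolute

variable (hp : p.IsAbsolute)
include hp

lemma swap : (p.comp (LinearEquiv.prodComm ℝ ℝ ℝ).toLinearMap).IsAbsolute :=
  fun a b => hp b a

lemma apply_neg_fst (a b : ℝ) : p (-a, b) = p (a, b) := by
  rw [hp, abs_neg, ← hp]

lemma apply_neg_snd (a b : ℝ) : p (a, -b) = p (a, b) :=
  hp.swap.apply_neg_fst b a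

lemma apply_le_apply_of_abs_le_fst {a a' : ℝ} (b : ℝ) (h : |a| ≤ |a'|) :
    p (a, b) ≤ p (a', b) := by
  rcases eq_or_ne a' 0 with rfl | ha'
  · rw [abs_zero, abs_nonpos_iff] at h
    rw [h]
  set t := a / a'
  obtain ⟨ht₁, ht₂⟩ : -1 ≤ t ∧ t ≤ 1 := by
    rw [← abs_le, abs_div]
    exact div_le_one_of_le₀ h (abs_nonneg _)
  have hcomb : ((a, b) : ℝ × ℝ) = ((1 + t) / 2) • (a', b) + ((1 - t) / 2) • (-a', b) := by
    ext
    · simp only [Prod.fst_add, Prod.smul_fst, smul_eq_mul, t]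
      field_simp
      ring
    · simp only [Prod.snd_add, Prod.smul_snd, smul_eq_mul]
      ring
  calc p (a, b) ≤ (1 + t) / 2 * p (a', b) + (1 - t) / 2 * p (-a', b) := by
        rw [hcomb]
        refine (map_add_le_add p _ _).trans_eq ?_
        rw [map_smul_eq_mul, map_smul_eq_mul, Real.norm_of_nonneg (by linarith),
          Real.norm_of_nonneg (by linarith)]
    _ = p (a', b) := by
        rw [hp.apply_neg_fst]
        ring

lemma apply_le_apply_of_abs_le_snd (a : ℝ) {b b' : ℝ} (h : |b| ≤ |b'|) :
    p (a, b) ≤ p (a, b') :=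
  hp.swap.apply_le_apply_of_abs_le_fst a h

lemma exists_apply_inv_mk_eq_one_on_Icc (h₁ : 0 < p (1, 0)) (h₂ : 0 < p (0, 1)) :
    ∃ Y, 0 ≤ Y ∧ (∀ y ∈ Icc 0 Y, p ((p (1, 0))⁻¹, y) = 1) ∧
      ∀ y, Y < y → 1 < p ((p (1, 0))⁻¹, y) := by
  set u := (p (1, 0))⁻¹
  have hu : p (u, 0) = 1 := by
    rw [apply_mk_zero, abs_of_pos (inv_pos.2 h₁), inv_mul_cancel₀ h₁.ne']
  set S := {y : ℝ | 0 ≤ y ∧ p (u, y) ≤ 1}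
  have hS : IsClosed S :=
    isClosed_Ici.inter (isClosed_le (p.continuous_apply_mk u) continuous_const)
  have hbdd : BddAbove S := by
    refine ⟨(p (0, 1))⁻¹, fun y ⟨hy, hy1⟩ => ?_⟩
    have : p (0, y) ≤ p (u, y) := hp.apply_le_apply_of_abs_le_fst y (by simp)
    rw [apply_zero_mk, abs_of_nonneg hy] at this
    rw [← one_div, le_div_iff₀ h₂]
    linarith
  obtain ⟨hY, hY1⟩ := hS.csSup_mem ⟨0, le_rfl, hu.le⟩ hbdd
  refine ⟨sSup S, hY, fun y ⟨hy, hyY⟩ => le_antisymm ?_ ?_, fun y hy => ?_⟩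
  · refine (hp.apply_le_apply_of_abs_le_snd u ?_).trans hY1
    rwa [abs_of_nonneg hy, abs_of_nonneg hY]
  · exact hu.symm.le.trans (hp.apply_le_apply_of_abs_le_snd u (by simp))
  · by_contra! hy1
    exact hy.not_ge (le_csSup hbdd ⟨hY.trans hy.le, hy1⟩)

lemma apply_inv_mk_add_apply_mk_zero_le_two (h₁ : 0 < p (1, 0)) {a s t : ℝ} (ha : 0 ≤ a)
    (hts : |t| ≤ |s|) (has : p (a, s) ≤ 1) : p ((p (1, 0))⁻¹, t) + p (a, 0) ≤ 2 := by
  have ha1 : a * p (1, 0) ≤ 1 := by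
    rw [← abs_of_nonneg ha, ← apply_mk_zero]
    exact (hp.apply_le_apply_of_abs_le_snd a (by simp)).trans has
  have hsplit : ((p (1, 0))⁻¹, t) = ((a, t) : ℝ × ℝ) + ((p (1, 0))⁻¹ - a, 0) := by
    simp
  have : p ((p (1, 0))⁻¹ - a, 0) = 1 - a * p (1, 0) := by
    rw [apply_mk_zero, abs_of_nonneg (sub_nonneg.2 (by rwa [← one_div, le_div_iff₀ h₁])),
      sub_mul, inv_mul_cancel₀ h₁.ne']
  calc p ((p (1, 0))⁻¹, t) + p (a, 0) ≤ p (a, s) + (1 - a * p (1, 0)) + a * p (1, 0) := by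
        rw [hsplit, apply_mk_zero p a, abs_of_nonneg ha, ← this]
        gcongr
        exact (map_add_le_add p _ _).trans
          (add_le_add_left (hp.apply_le_apply_of_abs_le_snd a hts) _)
    _ ≤ 2 := by linarith

lemma stronglyMonotoneAt_of_snd_nonpos (h₁ : 0 < p (1, 0)) {Y ε : ℝ} (hY : 0 ≤ Y)
    (hsphere : ∀ y ∈ Icc 0 Y, p ((p (1, 0))⁻¹, y) = 1) (hε : 0 < ε) {x : ℝ × ℝ}
    (hx₁ : 0 < x.1) (hx₂ : x.2 ≤ 0) (hxY : (-x.2 - Y) * p (0, 1) < ε) :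
    StronglyMonotoneAt p ε x := by
  set s := -x.2
  have hs : 0 ≤ s := neg_nonneg.2 hx₂
  have hpos : x⁺ = (x.1, 0) := Prod.ext (max_eq_left hx₁.le) (max_eq_right hx₂)
  have hneg : x⁻ = (0, s) := Prod.ext (max_eq_right (neg_nonpos.2 hx₁.le)) (max_eq_left hs)
  have hunit : (p (x.1, 0))⁻¹ • ((x.1, 0) : ℝ × ℝ) = ((p (1, 0))⁻¹, 0) := by
    ext
    · simp only [Prod.smul_fst, smul_eq_mul, apply_mk_zero p x.1, abs_of_pos hx₁]
      field_simp
    · simp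
  have hfst (b : ℝ) :
      p (((p (1, 0))⁻¹, 0) - b • ((0, s) : ℝ × ℝ)) = p ((p (1, 0))⁻¹, b * s) := by
    rw [Prod.smul_mk, Prod.mk_sub_mk, smul_zero, sub_zero, zero_sub, smul_eq_mul,
      hp.apply_neg_snd]
  have hsnd (b : ℝ) (hb : b ≤ 1) :
      p (b • ((0, s) : ℝ × ℝ) - (0, s)) = (1 - b) * s * p (0, 1) := by
    rw [Prod.smul_mk, Prod.mk_sub_mk, smul_zero, sub_zero, smul_eq_mul, apply_zero_mk,
      abs_of_nonpos (by nlinarith)]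
    ring
  rw [StronglyMonotoneAt, hpos, hneg, hunit]
  by_cases hsY : s ≤ Y
  · refine ⟨1, ⟨zero_le_one, le_rfl⟩, ?_, ?_⟩
    · rw [hfst, one_mul]
      exact hsphere s ⟨hs, hsY⟩
    · rw [hsnd 1 le_rfl]
      simpa using hε
  · have hs₀ : 0 < s := hY.trans_lt (not_le.1 hsY)
    have hb : Y / s ≤ 1 := div_le_one_of_le₀ (le_of_not_ge hsY) hs
    refine ⟨Y / s, ⟨by positivity, hb⟩, ?_, ?_⟩
    · rw [hfst, div_mul_cancel₀ _ hs₀.ne']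
      exact hsphere Y ⟨hY, le_rfl⟩
    · rwa [hsnd _ hb, sub_mul, one_mul, div_mul_cancel₀ _ hs₀.ne']

lemma exists_stronglyMonotoneAt_of_snd_nonpos (h₁ : 0 < p (1, 0)) (h₂ : 0 < p (0, 1))
    {ε : ℝ} (hε : 0 < ε) :
    ∃ δ > 0, ∀ x : ℝ × ℝ, 0 < x.1 → x.2 ≤ 0 → p x ≤ 1 → 1 - δ < p x⁺ →
      StronglyMonotoneAt p ε x := by
  obtain ⟨Y, hY, hsphere, hout⟩ := hp.exists_apply_inv_mk_eq_one_on_Icc h₁ h₂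
  set t := Y + ε / p (0, 1)
  have hYt : Y < t := lt_add_of_pos_right Y (by positivity)
  refine ⟨p ((p (1, 0))⁻¹, t) - 1, by linarith [hout t hYt], fun x hx₁ hx₂ hx hδ => ?_⟩
  refine hp.stronglyMonotoneAt_of_snd_nonpos h₁ hY hsphere hε hx₁ hx₂ ?_
  have hxt : -x.2 < t := by
    by_contra! h
    have hpos : x⁺ = (x.1, 0) := Prod.ext (max_eq_left hx₁.le) (max_eq_right hx₂)
    have := hp.apply_inv_mk_add_apply_mk_zero_le_two h₁ (s := -x.2) (t := t) hx₁.le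
      (by rwa [abs_of_nonneg (hY.trans hYt.le), abs_of_nonneg (neg_nonneg.2 hx₂)])
      (by rwa [hp.apply_neg_snd])
    rw [hpos] at hδ
    linarith
  calc (-x.2 - Y) * p (0, 1) < (t - Y) * p (0, 1) := by gcongr
    _ = ε := by simp only [t, add_sub_cancel_left, div_mul_cancel₀ _ h₂.ne']

lemma exists_stronglyMonotoneAt (h₁ : 0 < p (1, 0)) (h₂ : 0 < p (0, 1)) {ε : ℝ} (hε : 0 < ε) :
    ∃ δ, 0 < δ ∧ δ < ε ∧ ∀ x : ℝ × ℝ, p x ≤ 1 → 1 - δ < p x⁺ → p.StronglyMonotoneAt ε x := by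
  obtain ⟨δ₁, hδ₁, H₁⟩ := hp.exists_stronglyMonotoneAt_of_snd_nonpos h₁ h₂ hε
  obtain ⟨δ₂, hδ₂, H₂⟩ := hp.swap.exists_stronglyMonotoneAt_of_snd_nonpos h₂ h₁ hε
  obtain ⟨δ, hδ₀, hδε, hδ1, hδδ₁, hδδ₂⟩ : ∃ δ, 0 < δ ∧ δ < ε ∧ δ < 1 ∧ δ ≤ δ₁ ∧ δ ≤ δ₂ :=
    ⟨min (min ε 1 / 2) (min δ₁ δ₂), by positivity,
      by linarith [min_le_left (min ε 1 / 2) (min δ₁ δ₂), min_le_left ε 1],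
      by linarith [min_le_left (min ε 1 / 2) (min δ₁ δ₂), min_le_right ε 1],
      (min_le_right _ _).trans (min_le_left _ _), (min_le_right _ _).trans (min_le_right _ _)⟩
  refine ⟨δ, hδ₀, hδε, fun x hx hxδ => ?_⟩
  rcases le_or_gt x.1 0 with hx₁ | hx₁ <;> rcases le_or_gt x.2 0 with hx₂ | hx₂
  · rw [posPart_eq_zero.2 (Prod.le_def.2 ⟨hx₁, hx₂⟩), map_zero] at hxδ
    linarith
  · exact (H₂ x.swap hx₂ hx₁ hx (show 1 - δ₂ < p x⁺ by linarith)).of_swap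
  · exact H₁ x hx₁ hx₂ hx (by linarith)
  · have hx₀ : 0 ≤ x := Prod.le_def.2 ⟨hx₁.le, hx₂.le⟩
    rw [posPart_of_nonneg hx₀] at hxδ
    exact stronglyMonotoneAt_of_nonneg hε hx₀ (by linarith)

end IsAbsolute

end Seminorm

theorem stmt14_general (N : ℝ × ℝ → ℝ)
    (htri : ∀ x y : ℝ × ℝ, N (x + y) ≤ N x + N y)
    (hsmul : ∀ (c : ℝ) (x : ℝ × ℝ), N (c • x) = |c| * N x)
    (hdef : ∀ x : ℝ × ℝ, N x = 0 → x = 0)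
    (habs : ∀ a b : ℝ, N (a, b) = N (|a|, |b|))
    (ε : ℝ) (hε0 : 0 < ε) :
    ∃ δ : ℝ, 0 < δ ∧ δ < ε ∧
      ∀ x : ℝ × ℝ, N x ≤ 1 → 1 - δ < N (max x.1 0, max x.2 0) →
        ∃ b : ℝ, b ∈ Set.Icc (0 : ℝ) 1 ∧
          N ((N (max x.1 0, max x.2 0))⁻¹ • ((max x.1 0, max x.2 0) : ℝ × ℝ) -
              b • ((max (-x.1) 0, max (-x.2) 0) : ℝ × ℝ)) = 1 ∧
          N (b • ((max (-x.1) 0, max (-x.2) 0) : ℝ × ℝ) -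
              ((max (-x.1) 0, max (-x.2) 0) : ℝ × ℝ)) < ε := by
  let p : Seminorm ℝ (ℝ × ℝ) := .of N htri fun c x => by rw [hsmul, Real.norm_eq_abs]
  have hp : p.IsAbsolute := habs
  have h₁ : 0 < p (1, 0) := (apply_nonneg p _).lt_of_ne' fun h => by simpa using hdef _ h
  have h₂ : 0 < p (0, 1) := (apply_nonneg p _).lt_of_ne' fun h => by simpa using hdef _ h
  -- `x⁺ = x ⊔ 0` and `x⁻ = -x ⊔ 0` unfold to the coordinatewise `max` of the statement
  exact hp.exists_stronglyMonotoneAt h₁ h₂ hε0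

/-- `ℝ²` with an absolute norm and the coordinatewise order is strongly
monotone, where for `x = (x₁,x₂)` the positive and negative parts are
`x⁺ = (max x₁ 0, max x₂ 0)` and `x⁻ = (max (-x₁) 0, max (-x₂) 0)`. -/
theorem stmt14 (N : ℝ × ℝ → ℝ)
    (htri : ∀ x y : ℝ × ℝ, N (x + y) ≤ N x + N y)
    (hsmul : ∀ (c : ℝ) (x : ℝ × ℝ), N (c • x) = |c| * N x)
    (hdef : ∀ x : ℝ × ℝ, N x = 0 → x = 0)
    (habs : ∀ a b : ℝ, N (a, b) = N (|a|, |b|))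
    (ε : ℝ) (hε0 : 0 < ε) (hε1 : ε < 1) :
    ∃ δ : ℝ, 0 < δ ∧ δ < ε ∧
      ∀ x : ℝ × ℝ, N x ≤ 1 → 1 - δ < N (max x.1 0, max x.2 0) →
        ∃ b : ℝ, b ∈ Set.Icc (0 : ℝ) 1 ∧
          N ((N (max x.1 0, max x.2 0))⁻¹ • ((max x.1 0, max x.2 0) : ℝ × ℝ) -
              b • ((max (-x.1) 0, max (-x.2) 0) : ℝ × ℝ)) = 1 ∧
          N (b • ((max (-x.1) 0, max (-x.2) 0) : ℝ × ℝ) -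
              ((max (-x.1) 0, max (-x.2) 0) : ℝ × ℝ)) < ε :=
  stmt14_general N htri hsmul hdef habs ε hε0
end

section
/- Define the norm N on ℝ³ by N(r,s,t) = max{|r|, |s|, (2/3)(|r|+|s|)} + |t|; this is an absolute normalized norm, and ℝ³ with N and the coordinatewise order is a Banach lattice. Let N* denote the dual norm, N*(u,v,w) = sup{u·r + v·s + w·t : N(r,s,t) ≤ 1}. Then the elements x = (3/4, −3/4, 0) and x* = (2/3, −2/3, 1) satisfy N(x) = 1, N*(x*) = 1 and x*·x = 1, yet N*(x*⁺)·N(x⁺) + N*(x*⁻)·N(x⁻) = 5/4 > 1, where for a vector w ∈ ℝ³, w⁺ and w⁻ denote the coordinatewise positive and negative parts. In particular this Banach lattice does not have the hereditary norm attaining property. -/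
/-!
The functional `x* = (2/3, -2/3, 1)` is dominated by `N` through the term `(2/3)(|r| + |s|)`
and `|t|`, and attains `1` both at `e₃` and at `x = (3/4, -3/4, 0)`. Its positive part
`(2/3, 0, 1)` still has dual norm `1` (attained at `e₃`), while `N(x⁺) = 3/4` is governed by the
term `|r|`; likewise `N*(x*⁻) = 2/3` and `N(x⁻) = 3/4`. Hence
`N*(x*⁺) N(x⁺) + N*(x*⁻) N(x⁻) = 3/4 + 1/2 = 5/4`.
-/

/-- The norm `N(r,s,t) = max {|r|, |s|, (2/3)(|r|+|s|)} + |t|` on `ℝ³`. -/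
noncomputable def N3 : ℝ × ℝ × ℝ → ℝ := fun x =>
  max (max |x.1| |x.2.1|) (2 / 3 * (|x.1| + |x.2.1|)) + |x.2.2|

/-- The dual norm of a norm `N` on `ℝ³`. -/
noncomputable def dualNorm3 (N : ℝ × ℝ × ℝ → ℝ) (w : ℝ × ℝ × ℝ) : ℝ :=
  sSup ((fun x : ℝ × ℝ × ℝ => w.1 * x.1 + w.2.1 * x.2.1 + w.2.2 * x.2.2) ''
    {x : ℝ × ℝ × ℝ | N x ≤ 1})

theorem dualNorm3_eq_of_le_of_attained {N : ℝ × ℝ × ℝ → ℝ} {w x₀ : ℝ × ℝ × ℝ} {c : ℝ}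
    (hc : 0 ≤ c) (hle : ∀ x, w.1 * x.1 + w.2.1 * x.2.1 + w.2.2 * x.2.2 ≤ c * N x)
    (hx₀ : N x₀ ≤ 1) (hattained : w.1 * x₀.1 + w.2.1 * x₀.2.1 + w.2.2 * x₀.2.2 = c) :
    dualNorm3 N w = c := by
  refine IsGreatest.csSup_eq ⟨⟨x₀, hx₀, hattained⟩, ?_⟩
  rintro _ ⟨x, hx, rfl⟩
  exact (hle x).trans (mul_le_of_le_one_right hc hx)

namespace N3

section

variable (r s t : ℝ)

theorem apply : N3 (r, s, t) = max (max |r| |s|) (2 / 3 * (|r| + |s|)) + |t| := rfl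

theorem abs_fst_le : |r| ≤ max (max |r| |s|) (2 / 3 * (|r| + |s|)) :=
  le_max_of_le_left (le_max_left _ _)

theorem abs_snd_le : |s| ≤ max (max |r| |s|) (2 / 3 * (|r| + |s|)) :=
  le_max_of_le_left (le_max_right _ _)

theorem two_thirds_mul_le : 2 / 3 * (|r| + |s|) ≤ max (max |r| |s|) (2 / 3 * (|r| + |s|)) :=
  le_max_right _ _

end

theorem add_le (x y : ℝ × ℝ × ℝ) : N3 (x + y) ≤ N3 x + N3 y := by
  obtain ⟨r, s, t⟩ := x
  obtain ⟨r', s', t'⟩ := y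
  have hr := abs_add_le r r'
  have hs := abs_add_le s s'
  have ht := abs_add_le t t'
  have h₁ := abs_fst_le r s
  have h₂ := abs_snd_le r s
  have h₃ := two_thirds_mul_le r s
  have h₁' := abs_fst_le r' s'
  have h₂' := abs_snd_le r' s'
  have h₃' := two_thirds_mul_le r' s'
  have hmax : max (max |r + r'| |s + s'|) (2 / 3 * (|r + r'| + |s + s'|)) ≤
      max (max |r| |s|) (2 / 3 * (|r| + |s|)) + max (max |r'| |s'|) (2 / 3 * (|r'| + |s'|)) :=
    max_le (max_le (by linarith) (by linarith)) (by linarith)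
  simp only [Prod.mk_add_mk, apply]
  linarith

theorem smul (c : ℝ) (x : ℝ × ℝ × ℝ) : N3 (c • x) = |c| * N3 x := by
  obtain ⟨r, s, t⟩ := x
  simp only [Prod.smul_mk, smul_eq_mul, apply, abs_mul, mul_add,
    mul_max_of_nonneg _ _ (abs_nonneg c)]
  ring_nf

theorem eq_zero {x : ℝ × ℝ × ℝ} (hx : N3 x = 0) : x = 0 := by
  obtain ⟨r, s, t⟩ := x
  rw [apply] at hx
  have h₁ := abs_fst_le r s
  have h₂ := abs_snd_le r s
  have hr₀ := abs_nonneg r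
  have ht := abs_nonneg t
  have hr : |r| ≤ 0 := by linarith
  have hs : |s| ≤ 0 := by linarith
  have ht' : |t| ≤ 0 := by linarith
  simp only [abs_nonpos_iff] at hr hs ht'
  simp [hr, hs, ht']

theorem abs_apply (x : ℝ × ℝ × ℝ) : N3 (|x.1|, |x.2.1|, |x.2.2|) = N3 x := by
  simp only [apply, abs_abs]
  rfl

end N3

theorem dualNorm3_N3_counterexample : dualNorm3 N3 (2 / 3, -2 / 3, 1) = 1 := by
  refine dualNorm3_eq_of_le_of_attained (x₀ := (0, 0, 1)) zero_le_one (fun ⟨r, s, t⟩ => ?_)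
    (by norm_num [N3.apply]) (by norm_num)
  have := N3.two_thirds_mul_le r s
  have := le_abs_self r
  have := neg_abs_le s
  have := le_abs_self t
  simp only [N3.apply]
  linarith

theorem dualNorm3_N3_counterexample_pos : dualNorm3 N3 (2 / 3, 0, 1) = 1 := by
  refine dualNorm3_eq_of_le_of_attained (x₀ := (0, 0, 1)) zero_le_one (fun ⟨r, s, t⟩ => ?_)
    (by norm_num [N3.apply]) (by norm_num)
  have := N3.two_thirds_mul_le r s
  have := le_abs_self r
  have := abs_nonneg s
  have := le_abs_self t
  simp only [N3.apply]
  linarith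

theorem dualNorm3_N3_counterexample_neg : dualNorm3 N3 (0, 2 / 3, 0) = 2 / 3 := by
  refine dualNorm3_eq_of_le_of_attained (x₀ := (0, 1, 0)) (by norm_num) (fun ⟨r, s, t⟩ => ?_)
    (by norm_num [N3.apply]) (by norm_num)
  have := N3.abs_snd_le r s
  have := le_abs_self s
  have := abs_nonneg t
  simp only [N3.apply]
  linarith

/-- `N3` is an absolute normalized norm on `ℝ³`, and for
`x = (3/4, -3/4, 0)` and `x* = (2/3, -2/3, 1)` one has `N3 x = 1`, `N3*(x*) = 1` and
`x*·x = 1`, yet `N3*(x*⁺)·N3(x⁺) + N3*(x*⁻)·N3(x⁻) = 5/4 > 1` (positive and negative parts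
taken coordinatewise); hence this Banach lattice fails the hereditary norm attaining
property. -/
theorem stmt15 :
    -- `N3` is a norm:
    (∀ x y : ℝ × ℝ × ℝ, N3 (x + y) ≤ N3 x + N3 y) ∧
    (∀ (c : ℝ) (x : ℝ × ℝ × ℝ), N3 (c • x) = |c| * N3 x) ∧
    (∀ x : ℝ × ℝ × ℝ, N3 x = 0 → x = 0) ∧
    -- `N3` is absolute and normalized:
    (∀ x : ℝ × ℝ × ℝ, N3 (|x.1|, |x.2.1|, |x.2.2|) = N3 x) ∧
    N3 (1, 0, 0) = 1 ∧ N3 (0, 1, 0) = 1 ∧ N3 (0, 0, 1) = 1 ∧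
    -- the counterexample:
    N3 (3 / 4, -3 / 4, 0) = 1 ∧
    dualNorm3 N3 (2 / 3, -2 / 3, 1) = 1 ∧
    (2 / 3 : ℝ) * (3 / 4) + (-2 / 3) * (-3 / 4) + 1 * 0 = 1 ∧
    dualNorm3 N3 (2 / 3, 0, 1) * N3 (3 / 4, 0, 0) +
      dualNorm3 N3 (0, 2 / 3, 0) * N3 (0, 3 / 4, 0) = 5 / 4 ∧
    (1 : ℝ) < 5 / 4 := by
  refine ⟨N3.add_le, N3.smul, fun _ => N3.eq_zero, N3.abs_apply, ?_, ?_, ?_, ?_,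
    dualNorm3_N3_counterexample, by norm_num, ?_, by norm_num⟩
  · norm_num [N3.apply]
  · norm_num [N3.apply]
  · norm_num [N3.apply]
  · norm_num [N3.apply]
  · rw [dualNorm3_N3_counterexample_pos, dualNorm3_N3_counterexample_neg]
    norm_num [N3.apply]
end

section
/- Let ‖·‖ be an absolute and normalized norm on ℝ². If c, d, e are nonnegative real numbers with d ≠ e and ‖(c,d)‖ = 1 = ‖(c,e)‖, then c = 1. -/
/-!
Along a horizontal line, `t ↦ ‖(c, t)‖` is convex and even, hence nondecreasing on `[0, ∞)`.
Taking the same value at two distinct points `d, e ≥ 0` forces it to be constant on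
`[0, max d e]`, so `1 = ‖(c, d)‖ = ‖(c, 0)‖ = c`.
-/

open Set

namespace Seminorm

variable {E F : Type*} [AddCommGroup E] [Module ℝ E] [AddCommGroup F] [Module ℝ F]

theorem convexOn_apply_add_smul (p : Seminorm ℝ E) (x v : E) :
    ConvexOn ℝ univ fun t : ℝ => p (x + t • v) := by
  refine ⟨convex_univ, fun s _ t _ a b ha hb hab => ?_⟩
  have hcombo : x + (a • s + b • t) • v = a • (x + s • v) + b • (x + t • v) := by
    simp only [smul_eq_mul]
    match_scalars <;> linarith
  simpa only [hcombo] using p.convexOn.2 (mem_univ _) (mem_univ _) ha hb hab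

theorem apply_mk_zero_le (p : Seminorm ℝ (E × F)) {a : E} {b : F}
    (hsymm : p (a, -b) = p (a, b)) : p (a, 0) ≤ p (a, b) := by
  have hsum : (a, b) + (a, -b) = (2 : ℝ) • (a, (0 : F)) := by
    ext <;> simp [two_smul]
  have := map_add_le_add p (a, b) (a, -b)
  rw [hsum, map_smul_eq_mul, hsymm, Real.norm_two] at this
  linarith

theorem apply_mk_zero_eq_of_apply_eq (p : Seminorm ℝ (E × ℝ)) {a : E}
    (hsymm : ∀ b, p (a, -b) = p (a, b)) {d e : ℝ} (hd : 0 ≤ d) (he : 0 ≤ e) (hde : d ≠ e)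
    (h : p (a, d) = p (a, e)) : p (a, 0) = p (a, d) := by
  have hconv : ConvexOn ℝ univ fun t : ℝ => p (a, t) := by
    simpa using p.convexOn_apply_add_smul (a, 0) (0, 1)
  refine le_antisymm (p.apply_mk_zero_le (hsymm d)) ?_
  rcases hde.lt_or_gt with hlt | hlt
  · simpa using hconv.le_left_of_right_le'' (mem_univ 0) (mem_univ e) hd hlt h.ge
  · simpa [h] using hconv.le_left_of_right_le'' (mem_univ 0) (mem_univ d) he hlt h.le

end Seminorm

theorem stmt17_general (N : ℝ × ℝ → ℝ)
    (htri : ∀ x y : ℝ × ℝ, N (x + y) ≤ N x + N y)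
    (hsmul : ∀ (c : ℝ) (x : ℝ × ℝ), N (c • x) = |c| * N x)
    (habs : ∀ a b : ℝ, N (a, b) = N (|a|, |b|))
    (hn1 : N (1, 0) = 1)
    (c d e : ℝ) (hc : 0 ≤ c) (hd : 0 ≤ d) (he : 0 ≤ e) (hde : d ≠ e)
    (h1 : N (c, d) = 1) (h2 : N (c, e) = 1) :
    c = 1 := by
  let p : Seminorm ℝ (ℝ × ℝ) := Seminorm.of N htri hsmul
  have hp : ∀ x, p x = N x := fun _ => rfl
  have hc0 : p (c, 0) = c := by
    simpa [hp, hn1, abs_of_nonneg hc] using hsmul c (1, 0)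
  have hsymm : ∀ b, p (c, -b) = p (c, b) := fun b => by
    rw [hp, hp, habs, abs_neg, ← habs]
  have := p.apply_mk_zero_eq_of_apply_eq hsymm hd he hde (by rw [hp, hp, h1, h2])
  rwa [hc0, hp, h1] at this

/-- For an absolute normalized norm on `ℝ²`: if `c, d, e ≥ 0`, `d ≠ e` and
`‖(c,d)‖ = 1 = ‖(c,e)‖`, then `c = 1`. -/
theorem stmt17 (N : ℝ × ℝ → ℝ)
    (htri : ∀ x y : ℝ × ℝ, N (x + y) ≤ N x + N y)
    (hsmul : ∀ (c : ℝ) (x : ℝ × ℝ), N (c • x) = |c| * N x)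
    (hdef : ∀ x : ℝ × ℝ, N x = 0 → x = 0)
    (habs : ∀ a b : ℝ, N (a, b) = N (|a|, |b|))
    (hn1 : N (1, 0) = 1) (hn2 : N (0, 1) = 1)
    (c d e : ℝ) (hc : 0 ≤ c) (hd : 0 ≤ d) (he : 0 ≤ e) (hde : d ≠ e)
    (h1 : N (c, d) = 1) (h2 : N (c, e) = 1) :
    c = 1 :=
  stmt17_general N htri hsmul habs hn1 c d e hc hd he hde h1 h2
end

section
/- Let ‖·‖ be an absolute and normalized norm on ℝ² such that max{x ∈ ℝ : ‖(x,1)‖ = 1} = 0 and max{y ∈ ℝ : ‖(1,y)‖ = 1} = 0. Then for all r, s, t ∈ ℝ with |s| < |t|, one has ‖(r,s)‖ < ‖(r,t)‖ and ‖(s,r)‖ < ‖(t,r)‖. -/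
/-!
Each horizontal slice `y ↦ N (a, y)` of an absolute norm is convex and even, hence nondecreasing
on `[0, ∞)`. A convex function on `[0, ∞)` that is larger at every `c > 0` than at `0` is strictly
increasing there, since a flat piece `f b = f c` with `0 < b < c` would force `f b ≤ f 0`.
For `a > 0` the value `N (a, c)` with `c > 0` can only equal `N (a, 0) = a` if `N (1, c / a) = 1`,
which the hypothesis `max {y : N (1, y) = 1} = 0` excludes. The vertical statement is the
horizontal one for `N ∘ Prod.swap`.
-/

open Set

theorem ConvexOn.monotoneOn_Ici_of_even {f : ℝ → ℝ} (hf : ConvexOn ℝ univ f)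
    (heven : ∀ x, f (-x) = f x) : MonotoneOn f (Ici 0) := by
  intro b hb c _ hbc
  have hseg : b ∈ segment ℝ (-c) c := by
    rw [segment_eq_Icc (by linarith [mem_Ici.mp hb])]
    exact ⟨by linarith [mem_Ici.mp hb], hbc⟩
  calc f b ≤ max (f (-c)) (f c) := hf.le_on_segment (mem_univ _) (mem_univ _) hseg
    _ = f c := by rw [heven, max_self]

theorem ConvexOn.strictMonoOn_Ici_of_lt {f : ℝ → ℝ} (hf : ConvexOn ℝ (Ici 0) f)
    (hlt : ∀ c, 0 < c → f 0 < f c) : StrictMonoOn f (Ici 0) := by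
  intro b hb c hc hbc
  rcases (mem_Ici.mp hb).eq_or_lt with rfl | hb0
  · exact hlt c hbc
  · by_contra! hcb
    exact (hlt b hb0).not_ge (hf.le_left_of_right_le'' self_mem_Ici hc hb0.le hbc hcb)

section AbsoluteNorm

variable {N : ℝ × ℝ → ℝ}

theorem convexOn_apply_mk (htri : ∀ x y : ℝ × ℝ, N (x + y) ≤ N x + N y)
    (hsmul : ∀ (c : ℝ) (x : ℝ × ℝ), N (c • x) = |c| * N x) (a : ℝ) :
    ConvexOn ℝ univ fun y ↦ N (a, y) := by
  have := (Seminorm.of (𝕜 := ℝ) N htri hsmul).convexOn.comp_affineMap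
    (AffineMap.const ℝ ℝ ((a, 0) : ℝ × ℝ) + (LinearMap.inr ℝ ℝ ℝ).toAffineMap)
  simp only [AffineMap.coe_add, AffineMap.coe_const, LinearMap.coe_toAffineMap, LinearMap.coe_inr,
    preimage_univ, Function.comp_def, Pi.add_apply, Function.const_apply, Prod.mk_add_mk, add_zero,
    zero_add] at this
  exact this

theorem apply_mk_zero (hsmul : ∀ (c : ℝ) (x : ℝ × ℝ), N (c • x) = |c| * N x)
    (hn1 : N (1, 0) = 1) (a : ℝ) : N (a, 0) = |a| := by
  simpa [hn1] using hsmul a (1, 0)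

theorem apply_zero_mk (hsmul : ∀ (c : ℝ) (x : ℝ × ℝ), N (c • x) = |c| * N x)
    (hn2 : N (0, 1) = 1) (y : ℝ) : N (0, y) = |y| := by
  simpa [hn2] using hsmul y (0, 1)

theorem apply_mk_zero_lt_apply_mk (htri : ∀ x y : ℝ × ℝ, N (x + y) ≤ N x + N y)
    (hsmul : ∀ (c : ℝ) (x : ℝ × ℝ), N (c • x) = |c| * N x)
    (habs : ∀ a b : ℝ, N (a, b) = N (|a|, |b|))
    (hn1 : N (1, 0) = 1) (hn2 : N (0, 1) = 1)
    (hmax2 : IsGreatest {y : ℝ | N (1, y) = 1} 0)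
    {a c : ℝ} (ha : 0 ≤ a) (hc : 0 < c) : N (a, 0) < N (a, c) := by
  rcases ha.eq_or_lt with rfl | ha
  · simpa [apply_zero_mk hsmul hn2, abs_of_pos hc] using hc
  have hmono : MonotoneOn (fun y ↦ N (a, y)) (Ici 0) :=
    (convexOn_apply_mk htri hsmul a).monotoneOn_Ici_of_even fun y ↦ by
      rw [habs a (-y), habs a y, abs_neg]
  refine (hmono self_mem_Ici hc.le hc.le).lt_of_ne fun heq : N (a, 0) = N (a, c) ↦ ?_
  rw [apply_mk_zero hsmul hn1, abs_of_pos ha] at heq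
  have hone : N (1, c / a) = 1 := by
    have := hsmul a⁻¹ (a, c)
    rw [← heq, abs_of_pos (inv_pos.mpr ha), inv_mul_cancel₀ ha.ne'] at this
    simpa [ha.ne', div_eq_inv_mul] using this
  exact (div_pos hc ha).not_ge (hmax2.2 hone)

theorem strictMonoOn_apply_mk (htri : ∀ x y : ℝ × ℝ, N (x + y) ≤ N x + N y)
    (hsmul : ∀ (c : ℝ) (x : ℝ × ℝ), N (c • x) = |c| * N x)
    (habs : ∀ a b : ℝ, N (a, b) = N (|a|, |b|))
    (hn1 : N (1, 0) = 1) (hn2 : N (0, 1) = 1)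
    (hmax2 : IsGreatest {y : ℝ | N (1, y) = 1} 0)
    {a : ℝ} (ha : 0 ≤ a) : StrictMonoOn (fun y ↦ N (a, y)) (Ici 0) :=
  ((convexOn_apply_mk htri hsmul a).subset (subset_univ _) (convex_Ici 0)).strictMonoOn_Ici_of_lt
    fun _ hc ↦ apply_mk_zero_lt_apply_mk htri hsmul habs hn1 hn2 hmax2 ha hc

theorem apply_mk_lt_apply_mk_of_abs_lt (htri : ∀ x y : ℝ × ℝ, N (x + y) ≤ N x + N y)
    (hsmul : ∀ (c : ℝ) (x : ℝ × ℝ), N (c • x) = |c| * N x)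
    (habs : ∀ a b : ℝ, N (a, b) = N (|a|, |b|))
    (hn1 : N (1, 0) = 1) (hn2 : N (0, 1) = 1)
    (hmax2 : IsGreatest {y : ℝ | N (1, y) = 1} 0)
    (r : ℝ) {s t : ℝ} (hst : |s| < |t|) : N (r, s) < N (r, t) := by
  rw [habs r s, habs r t]
  exact strictMonoOn_apply_mk htri hsmul habs hn1 hn2 hmax2 (abs_nonneg r)
    (abs_nonneg s) (abs_nonneg t) hst

end AbsoluteNorm

theorem stmt18_general (N : ℝ × ℝ → ℝ)
    (htri : ∀ x y : ℝ × ℝ, N (x + y) ≤ N x + N y)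
    (hsmul : ∀ (c : ℝ) (x : ℝ × ℝ), N (c • x) = |c| * N x)
    (habs : ∀ a b : ℝ, N (a, b) = N (|a|, |b|))
    (hn1 : N (1, 0) = 1) (hn2 : N (0, 1) = 1)
    (hmax1 : IsGreatest {x : ℝ | N (x, 1) = 1} 0)
    (hmax2 : IsGreatest {y : ℝ | N (1, y) = 1} 0)
    (r s t : ℝ) (hst : |s| < |t|) :
    N (r, s) < N (r, t) ∧ N (s, r) < N (t, r) :=
  ⟨apply_mk_lt_apply_mk_of_abs_lt htri hsmul habs hn1 hn2 hmax2 r hst,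
    apply_mk_lt_apply_mk_of_abs_lt (N := N ∘ Prod.swap) (fun x y ↦ htri x.swap y.swap)
      (fun c x ↦ hsmul c x.swap) (fun a b ↦ habs b a) hn2 hn1 hmax1 r hst⟩

/-- Let `N` be an absolute normalized norm on `ℝ²` such that
`max {x : ‖(x,1)‖ = 1} = 0` and `max {y : ‖(1,y)‖ = 1} = 0`. Then `|s| < |t|` implies
`‖(r,s)‖ < ‖(r,t)‖` and `‖(s,r)‖ < ‖(t,r)‖`. -/
theorem stmt18 (N : ℝ × ℝ → ℝ)
    (htri : ∀ x y : ℝ × ℝ, N (x + y) ≤ N x + N y)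
    (hsmul : ∀ (c : ℝ) (x : ℝ × ℝ), N (c • x) = |c| * N x)
    (hdef : ∀ x : ℝ × ℝ, N x = 0 → x = 0)
    (habs : ∀ a b : ℝ, N (a, b) = N (|a|, |b|))
    (hn1 : N (1, 0) = 1) (hn2 : N (0, 1) = 1)
    (hmax1 : IsGreatest {x : ℝ | N (x, 1) = 1} 0)
    (hmax2 : IsGreatest {y : ℝ | N (1, y) = 1} 0)
    (r s t : ℝ) (hst : |s| < |t|) :
    N (r, s) < N (r, t) ∧ N (s, r) < N (t, r) :=
  stmt18_general N htri hsmul habs hn1 hn2 hmax1 hmax2 r s t hst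
end
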